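/- arXiv:2506.13911 — 3 statements merged into one kernel-verified Lean document; each statement's English description precedes it below -/
import Mathlib

section
/- For all d ≥ 0 and r ≥ 1, the separating power of HES-GNN node classifiers of depth d and radius r equals that of graded hybrid subgraph logic sentences with radius r and at most d nested ↓_{W^r} operators: ρ(HES-GNN-(d,r)) = ρ(GML(↓^d_{W^r})). Moreover, ρ(HES-GNN with radius r, any depth) = ρ(GML(↓_{W^r})). -/
open Classical

/-! ### Graphs with `p` binary node features -/

/-- A finite undirected graph with node labels over `p` binary features. -/
structure LGraph (p : ℕ) : Type 1 where
  V : Type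
  fintypeV : Fintype V
  decEqV : DecidableEq V
  adj : V → V → Prop
  symm : ∀ {u v}, adj u v → adj v u
  irrefl : ∀ v, ¬ adj v v
  lab : V → Fin p → Prop

attribute [instance] LGraph.fintypeV LGraph.decEqV

namespace LGraph

variable {p : ℕ}

/-- The finset of neighbours of a node. -/
noncomputable def nbrFinset (G : LGraph p) (v : G.V) : Finset G.V :=
  Finset.univ.filter (fun u => G.adj v u)

/-- Multi-hot label encoding. -/
noncomputable def embG (G : LGraph p) (v : G.V) : Fin p → ℝ :=
  fun i => if G.lab v i then 1 else 0

/-- `G.within v r u` : node `u` is at distance at most `r` from `v`. -/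
def within (G : LGraph p) (v : G.V) : ℕ → G.V → Prop
  | 0 => fun u => u = v
  | (r+1) => fun u => G.within v r u ∨ ∃ w, G.within v r w ∧ G.adj w u

theorem within_self (G : LGraph p) (v : G.V) : ∀ r, G.within v r v
  | 0 => rfl
  | (r+1) => Or.inl (G.within_self v r)

/-- Induced subgraph on a set of nodes. -/
noncomputable def induce (G : LGraph p) (S : Set G.V) : LGraph p where
  V := {u // u ∈ S}
  fintypeV := Fintype.ofFinite _
  decEqV := inferInstance
  adj a b := G.adj a.1 b.1
  symm h := G.symm h
  irrefl a h := G.irrefl a.1 h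
  lab a := G.lab a.1

/-- `G_v^r` : the induced subgraph on the radius-`r` neighbourhood of `v`. -/
noncomputable def ball (G : LGraph p) (v : G.V) (r : ℕ) : LGraph p :=
  G.induce {u | G.within v r u}

/-- The centre of `G_v^r`, as a node of `G_v^r`. -/
noncomputable def ballCenter (G : LGraph p) (v : G.V) (r : ℕ) : (G.ball v r).V :=
  ⟨v, G.within_self v r⟩

end LGraph

/-! ### GNNs -/

/-- A single message-passing layer: aggregation over the multiset of neighbour
embeddings and combination of the node embedding (concatenated via `Fin.append`)
with the aggregated value. -/
structure GNNLayer (Din Dout : ℕ) : Type where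
  agg : Multiset (Fin Din → ℝ) → (Fin Din → ℝ)
  com : (Fin (Din + Din) → ℝ) → (Fin Dout → ℝ)

/-- A `(D,D')`-GNN: a nonempty sequence of layers with matching dimensions. -/
inductive GNN : ℕ → ℕ → Type
  | last {D D'} (l : GNNLayer D D') : GNN D D'
  | cons {D Dm D'} (l : GNNLayer D Dm) (rest : GNN Dm D') : GNN D D'

noncomputable def GNNLayer.apply {p Din Dout : ℕ} (l : GNNLayer Din Dout) (G : LGraph p)
    (emb : G.V → Fin Din → ℝ) : G.V → Fin Dout → ℝ :=
  fun v => l.com (Fin.append (emb v) (l.agg ((G.nbrFinset v).val.map emb)))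

/-- Running a GNN on an embedded graph. -/
noncomputable def GNN.run {p : ℕ} : {D D' : ℕ} → GNN D D' → (G : LGraph p) →
    (G.V → Fin D → ℝ) → (G.V → Fin D' → ℝ)
  | _, _, .last l, G, emb => l.apply G emb
  | _, _, .cons l rest, G, emb => rest.run G (l.apply G emb)

/-- The node classifier of a `(p,1)`-GNN (as a proposition: value `1` ↔ output `> 0`). -/
def GNN.clsP {p : ℕ} (A : GNN p 1) (G : LGraph p) (v : G.V) : Prop :=
  0 < A.run G G.embG v 0

/-- The node classifier of a `(p,1)`-GNN, as a boolean value. -/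
noncomputable def GNN.cls {p : ℕ} (A : GNN p 1) (G : LGraph p) (v : G.V) : Bool :=
  if A.clsP G v then true else false

/-! ### Hierarchical Ego GNNs -/

/-- A `(D,D')`-HE-GNN of nesting depth `d`. -/
inductive HEGNN : ℕ → ℕ → ℕ → Type
  | base {D D'} (A : GNN D D') : HEGNN 0 D D'
  | nest {d D D'' D'} (B : HEGNN d (D+1) D'') (C : GNN (D + D'') D') : HEGNN (d+1) D D'

noncomputable def HEGNN.run {p : ℕ} : {d D D' : ℕ} → HEGNN d D D' → (G : LGraph p) →
    (G.V → Fin D → ℝ) → (G.V → Fin D' → ℝ)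
  | _, _, _, .base A, G, emb => A.run G emb
  | _, _, _, .nest B C, G, emb =>
      C.run G (fun v => Fin.append (emb v)
        (B.run G (fun u => Fin.append (emb u) (fun _ => if u = v then (1:ℝ) else 0)) v))

def HEGNN.clsP {p d : ℕ} (A : HEGNN d p 1) (G : LGraph p) (v : G.V) : Prop :=
  0 < A.run G G.embG v 0

noncomputable def HEGNN.cls {p d : ℕ} (A : HEGNN d p 1) (G : LGraph p) (v : G.V) : Bool :=
  if A.clsP G v then true else false

/-! ### Hierarchical Ego Subgraph GNNs -/

/-- A `(D,D')`-HES-GNN of depth `d`; each nesting step carries its own radius `r`. -/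
inductive HESGNN : ℕ → ℕ → ℕ → Type
  | base {D D'} (A : GNN D D') : HESGNN 0 D D'
  | nest {d D D'' D'} (r : ℕ) (B : HESGNN d (D+1) D'') (C : GNN (D + D'') D') :
      HESGNN (d+1) D D'

noncomputable def HESGNN.run {p : ℕ} : {d D D' : ℕ} → HESGNN d D D' → (G : LGraph p) →
    (G.V → Fin D → ℝ) → (G.V → Fin D' → ℝ)
  | _, _, _, .base A, G, emb => A.run G emb
  | _, _, _, .nest r B C, G, emb =>
      C.run G (fun v => Fin.append (emb v)
        (B.run (G.ball v r)
          (fun u => Fin.append (emb u.1) (fun _ => if u.1 = v then (1:ℝ) else 0))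
          (G.ballCenter v r)))

/-- All subgraph restrictions in the HES-GNN use radius `r`. -/
def HESGNN.radIs : {d D D' : ℕ} → ℕ → HESGNN d D D' → Prop
  | _, _, _, _, .base _ => True
  | _, _, _, r, .nest r' B _ => r' = r ∧ B.radIs r

def HESGNN.clsP {p d : ℕ} (A : HESGNN d p 1) (G : LGraph p) (v : G.V) : Prop :=
  0 < A.run G G.embG v 0

noncomputable def HESGNN.cls {p d : ℕ} (A : HESGNN d p 1) (G : LGraph p) (v : G.V) : Bool :=
  if A.clsP G v then true else false
/-! ### Graded modal logic GML -/

inductive GML (p : ℕ) : Type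
  | prop (i : Fin p)
  | top
  | and (φ ψ : GML p)
  | not (φ : GML p)
  | dia (k : ℕ) (φ : GML p)

/-- Satisfaction of a GML formula at a node. -/
def GML.sat {p : ℕ} (G : LGraph p) : GML p → G.V → Prop
  | .prop i, v => G.lab v i
  | .top, _ => True
  | .and φ ψ, v => φ.sat G v ∧ ψ.sat G v
  | .not φ, v => ¬ φ.sat G v
  | .dia k φ, v => k ≤ Nat.card {u : G.V // G.adj v u ∧ φ.sat G u}

/-! ### Graded hybrid logic GML(↓) -/

inductive GMLd (p : ℕ) : Type
  | prop (i : Fin p)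
  | var (x : ℕ)
  | top
  | and (φ ψ : GMLd p)
  | not (φ : GMLd p)
  | dia (k : ℕ) (φ : GMLd p)
  | bind (x : ℕ) (φ : GMLd p)

/-- Satisfaction of a GML(↓) formula at a node, relative to an assignment of
variables to (marked) nodes; `↓x.φ` marks the current node with `x`. -/
def GMLd.sat {p : ℕ} (G : LGraph p) : GMLd p → (ℕ → Option G.V) → G.V → Prop
  | .prop i, _, v => G.lab v i
  | .var x, g, v => g x = some v
  | .top, _, _ => True
  | .and φ ψ, g, v => φ.sat G g v ∧ ψ.sat G g v
  | .not φ, g, v => ¬ φ.sat G g v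
  | .dia k φ, g, v => k ≤ Nat.card {u : G.V // G.adj v u ∧ φ.sat G g u}
  | .bind x φ, g, v => φ.sat G (Function.update g x (some v)) v

def GMLd.free {p : ℕ} : GMLd p → Set ℕ
  | .prop _ => ∅
  | .var x => {x}
  | .top => ∅
  | .and φ ψ => φ.free ∪ ψ.free
  | .not φ => φ.free
  | .dia _ φ => φ.free
  | .bind x φ => φ.free \ {x}

/-- A sentence has no free variables. -/
def GMLd.Sentence {p : ℕ} (φ : GMLd p) : Prop := φ.free = ∅

/-- The ↓-nesting-depth of a formula. -/
def GMLd.bindDepth {p : ℕ} : GMLd p → ℕ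
  | .prop _ => 0
  | .var _ => 0
  | .top => 0
  | .and φ ψ => max φ.bindDepth ψ.bindDepth
  | .not φ => φ.bindDepth
  | .dia _ φ => φ.bindDepth
  | .bind _ φ => φ.bindDepth + 1

/-- Satisfaction of a sentence (empty assignment). -/
def GMLd.satS {p : ℕ} (G : LGraph p) (φ : GMLd p) (v : G.V) : Prop :=
  φ.sat G (fun _ => none) v

/-! ### Graded hybrid subgraph logic: the fragment GML(↓_W) -/

inductive GMLW (p : ℕ) : Type
  | prop (i : Fin p)
  | var (x : ℕ)
  | top
  | and (φ ψ : GMLW p)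
  | not (φ : GMLW p)
  | dia (k : ℕ) (φ : GMLW p)
  /-- `↓_{W^r} x. φ`, i.e. `↓x. W^r φ`. -/
  | bindW (x : ℕ) (r : ℕ) (φ : GMLW p)

/-- Restrict an assignment along passage to an induced subgraph: markings of
nodes outside the subgraph disappear. -/
noncomputable def restrictAssign {p : ℕ} {G : LGraph p} (S : Set G.V)
    (g : ℕ → Option G.V) : ℕ → Option (G.induce S).V :=
  fun x => (g x).bind (fun w => if h : w ∈ S then some ⟨w, h⟩ else none)

/-- Satisfaction for the fragment GML(↓_W): `↓x.W^r φ` marks the current node `v`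
with `x` and evaluates `φ` in the subgraph `G_v^r`. -/
noncomputable def GMLW.sat {p : ℕ} : GMLW p → (G : LGraph p) → (ℕ → Option G.V) → G.V → Prop
  | .prop i, G, _, v => G.lab v i
  | .var x, _, g, v => g x = some v
  | .top, _, _, _ => True
  | .and φ ψ, G, g, v => φ.sat G g v ∧ ψ.sat G g v
  | .not φ, G, g, v => ¬ φ.sat G g v
  | .dia k φ, G, g, v => k ≤ Nat.card {u : G.V // G.adj v u ∧ φ.sat G g u}
  | .bindW x r φ, G, g, v =>
      φ.sat (G.ball v r) (restrictAssign _ (Function.update g x (some v))) (G.ballCenter v r)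

def GMLW.free {p : ℕ} : GMLW p → Set ℕ
  | .prop _ => ∅
  | .var x => {x}
  | .top => ∅
  | .and φ ψ => φ.free ∪ ψ.free
  | .not φ => φ.free
  | .dia _ φ => φ.free
  | .bindW x _ φ => φ.free \ {x}

def GMLW.Sentence {p : ℕ} (φ : GMLW p) : Prop := φ.free = ∅

/-- The nesting depth of `↓_{W^r}` operators. -/
def GMLW.bindDepth {p : ℕ} : GMLW p → ℕ
  | .prop _ => 0
  | .var _ => 0
  | .top => 0
  | .and φ ψ => max φ.bindDepth ψ.bindDepth
  | .not φ => φ.bindDepth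
  | .dia _ φ => φ.bindDepth
  | .bindW _ _ φ => φ.bindDepth + 1

/-- All `↓_{W}` operators in the formula use radius `r`. -/
def GMLW.radIs {p : ℕ} (r : ℕ) : GMLW p → Prop
  | .prop _ => True
  | .var _ => True
  | .top => True
  | .and φ ψ => φ.radIs r ∧ ψ.radIs r
  | .not φ => φ.radIs r
  | .dia _ φ => φ.radIs r
  | .bindW _ r' φ => r' = r ∧ φ.radIs r

noncomputable def GMLW.satS {p : ℕ} (G : LGraph p) (φ : GMLW p) (v : G.V) : Prop :=
  φ.sat G (fun _ => none) v
/-! ### Weisfeiler–Leman and Individualization-Refinement -/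

/-- An (ordered) space of colors together with a perfect (injective) hash
function whose domains are: node labelings (initial colors), pairs of a color
and a multiset of colors (refinement), and pairs of a color and a marking
(individualization). -/
structure HashSetup (p : ℕ) : Type 1 where
  C : Type
  linC : LinearOrder C
  hInit : (Fin p → Prop) → C
  hRefine : C → Multiset C → C
  hIndiv : C → Prop → C
  inj : Function.Injective
    (Sum.elim hInit (Sum.elim (fun y : C × Multiset C => hRefine y.1 y.2)
      (fun y : C × Prop => hIndiv y.1 y.2)))

/-- A coloring is discrete if all color classes are singletons. -/
def Discrete {V C : Type} (col : V → C) : Prop :=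
  ∀ u w, col u = col w → u = w

/-- One round of color refinement. -/
noncomputable def wlStep {p : ℕ} (H : HashSetup p) (G : LGraph p)
    (col : G.V → H.C) : G.V → H.C :=
  fun v => H.hRefine (col v) ((G.nbrFinset v).val.map col)

/-- `wlIter H G d col` = `WL(G, col, d)`. -/
noncomputable def wlIter {p : ℕ} (H : HashSetup p) (G : LGraph p) :
    ℕ → (G.V → H.C) → (G.V → H.C)
  | 0, col => col
  | (d+1), col => wlStep H G (wlIter H G d col)

/-- The initial coloring `col_G`. -/
noncomputable def initCol {p : ℕ} (H : HashSetup p) (G : LGraph p) : G.V → H.C :=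
  fun v => H.hInit (G.lab v)

/-- Rose trees labeled by multisets of colors.  (Children are kept in a list;
the isomorphism relation below disregards their order.) -/
inductive CTree (C : Type) : Type
  | node (label : Multiset C) (children : List (CTree C))

/-- Isomorphism of trees whose nodes are labeled by multisets of colors. -/
inductive CTree.Iso {C : Type} : CTree C → CTree C → Prop
  | node {l : Multiset C} {cs1 cs2 : List (CTree C)}
      (e : Fin cs1.length ≃ Fin cs2.length)
      (h : ∀ i : Fin cs1.length, CTree.Iso (cs1.get i) (cs2.get (e i))) :
      CTree.Iso (.node l cs1) (.node l cs2)

/-- The multiset of all colors of a coloring. -/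
noncomputable def colMultiset {p : ℕ} (H : HashSetup p) (G : LGraph p)
    (col : G.V → H.C) : Multiset H.C :=
  Finset.univ.val.map col

/-- `WLIR H G d col` = the IR tree `WL-IR(G, col, d)` with at most `d`
individualization steps, with colorings recorded by their color multisets. -/
noncomputable def WLIR {p : ℕ} (H : HashSetup p) (G : LGraph p) :
    ℕ → (G.V → H.C) → CTree H.C
  | 0, col => .node (colMultiset H G (wlIter H G (Fintype.card G.V) col)) []
  | (d+1), col =>
    let col' := wlIter H G (Fintype.card G.V) col
    if hdisc : Discrete col' then .node (colMultiset H G col') []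
    else
      letI := H.linC
      let bigs : Finset H.C := (Finset.univ.image col').filter
        (fun c => 1 < (Finset.univ.filter (fun v => col' v = c)).card)
      have hne : bigs.Nonempty := by
        simp only [Discrete, not_forall] at hdisc
        obtain ⟨u, w, hc, hne'⟩ := hdisc
        refine ⟨col' u, Finset.mem_filter.mpr
          ⟨Finset.mem_image_of_mem _ (Finset.mem_univ u), ?_⟩⟩
        exact Finset.one_lt_card.mpr
          ⟨u, by simp, w, by simp [hc.symm], hne'⟩
      let c := bigs.min' hne
      .node (colMultiset H G col')
        (((Finset.univ.filter (fun v => col' v = c)).toList).map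
          (fun vi => WLIR H G d (fun v => H.hIndiv (col' v) (v = vi))))

/-- `G ≡_{WL-IR-d} G'` : the IR trees with `d` individualization steps are
isomorphic. -/
noncomputable def WLIRequiv {p : ℕ} (H : HashSetup p) (G G' : LGraph p) (d : ℕ) : Prop :=
  CTree.Iso (WLIR H G d (initCol H G)) (WLIR H G' d (initCol H G'))

/-- Isomorphism of labeled graphs. -/
def LGraph.Iso {p : ℕ} (G G' : LGraph p) : Prop :=
  ∃ f : G.V ≃ G'.V, (∀ u v, G.adj u v ↔ G'.adj (f u) (f v)) ∧
    ∀ v i, G.lab v i ↔ G'.lab (f v) i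
/-! ### The k-dimensional Weisfeiler–Leman test -/

/-- The type of `k`-WL colors after `i` refinement rounds (shared between all
graphs, so colors of different graphs are directly comparable). -/
def KColor (p k : ℕ) : ℕ → Type
  | 0 => ((Fin k → Fin k → Prop) × (Fin k → Fin k → Prop) × (Fin k → Fin p → Prop))
  | (i+1) => KColor p k i × (Fin k → Multiset (KColor p k i))

/-- The `k`-WL coloring of `k`-tuples after `i` rounds: the initial color is the
isomorphism type of the tuple (equalities, adjacencies, labels); each round
refines by, for each position, the multiset of colors of all one-point
modifications of the tuple. -/
noncomputable def kwl (p k : ℕ) (G : LGraph p) :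
    (i : ℕ) → (Fin k → G.V) → KColor p k i
  | 0, t => (fun i j => t i = t j, fun i j => G.adj (t i) (t j), fun i a => G.lab (t i) a)
  | (i+1), t => (kwl p k G i t,
      fun j => Finset.univ.val.map (fun w => kwl p k G i (Function.update t j w)))

/-- `(G,v)` and `(G',v')` are *not* distinguished by the `k`-dimensional WL test:
the colors of the constant tuples `(v,…,v)` and `(v',…,v')` agree at every round
(equivalently, the stable colors agree). -/
noncomputable def kwlEquiv (p k : ℕ) (G : LGraph p) (v : G.V) (G' : LGraph p) (v' : G'.V) : Prop :=
  ∀ i : ℕ, kwl p k G i (fun _ => v) = kwl p k G' i (fun _ => v')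
/-! ### Rooted graphs, homomorphism counts, Sum/ReLU-FFNN GNNs, degree bounds -/

namespace LGraph
variable {p : ℕ}

/-- `(F,u)` is a rooted graph: every node is reachable from `u`. -/
def Rooted (F : LGraph p) (u : F.V) : Prop := ∀ w, ∃ r, F.within u r w

/-- Every node of `G` has degree at most `N`. -/
def degLe (G : LGraph p) (N : ℕ) : Prop := ∀ v, Nat.card {u : G.V // G.adj v u} ≤ N

end LGraph

/-- The number of homomorphisms from the pointed graph `(F,u)` to `(G,v)`:
maps sending the root to `v`, preserving edges, and preserving labels. -/
noncomputable def homCount {p : ℕ} (F G : LGraph p) (u : F.V) (v : G.V) : ℕ :=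
  Nat.card {h : F.V → G.V //
    h u = v ∧ (∀ ⦃w w'⦄, F.adj w w' → G.adj (h w) (h w')) ∧
    ∀ w i, F.lab w i → G.lab (h w) i}

/-- Pointwise sum aggregation. -/
def sumAgg (D : ℕ) : Multiset (Fin D → ℝ) → (Fin D → ℝ) :=
  fun M i => (M.map (fun x => x i)).sum

/-- ReLU feed-forward neural networks: compositions of affine maps and
coordinatewise ReLU. -/
inductive IsReLUFFNN : {n m : ℕ} → ((Fin n → ℝ) → (Fin m → ℝ)) → Prop
  | affine {n m : ℕ} (W : Matrix (Fin m) (Fin n) ℝ) (b : Fin m → ℝ) :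
      IsReLUFFNN (fun x => W.mulVec x + b)
  | relu {n : ℕ} : IsReLUFFNN (fun (x : Fin n → ℝ) i => max 0 (x i))
  | comp {n m k : ℕ} {f : (Fin n → ℝ) → (Fin m → ℝ)} {g : (Fin m → ℝ) → (Fin k → ℝ)} :
      IsReLUFFNN f → IsReLUFFNN g → IsReLUFFNN (fun x => g (f x))

/-- A layer uses Sum aggregation and a ReLU-FFNN combination function. -/
def GNNLayer.SumReLU {Din Dout : ℕ} (l : GNNLayer Din Dout) : Prop :=
  l.agg = sumAgg Din ∧ IsReLUFFNN l.com

def GNN.SumReLU : {D D' : ℕ} → GNN D D' → Prop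
  | _, _, .last l => l.SumReLU
  | _, _, .cons l rest => l.SumReLU ∧ rest.SumReLU

def HEGNN.SumReLU : {d D D' : ℕ} → HEGNN d D D' → Prop
  | _, _, _, .base A => A.SumReLU
  | _, _, _, .nest B C => B.SumReLU ∧ C.SumReLU
/-! ### Cycles, acyclicity, ego-rank, tree-width -/

namespace LGraph
variable {p : ℕ}

/-- There is a cycle (length ≥ 3, distinct nodes, consecutive nodes adjacent,
cyclically) all of whose nodes lie in `S`. -/
def CycleIn (G : LGraph p) (S : Set G.V) : Prop :=
  ∃ (n : ℕ) (c : Fin n → G.V), 3 ≤ n ∧ Function.Injective c ∧ (∀ i, c i ∈ S) ∧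
    ∀ i : Fin n, G.adj (c i) (c ⟨(i.val + 1) % n, Nat.mod_lt _ i.pos⟩)

/-- `G` is acyclic. -/
def Acyclic (G : LGraph p) : Prop := ¬ G.CycleIn Set.univ

/-- `(G,v)` is c-acyclic: every cycle of `G` passes through `v`. -/
def CAcyclic (G : LGraph p) (v : G.V) : Prop :=
  ∀ (n : ℕ) (c : Fin n → G.V), 3 ≤ n → Function.Injective c →
    (∀ i : Fin n, G.adj (c i) (c ⟨(i.val + 1) % n, Nat.mod_lt _ i.pos⟩)) →
    ∃ i, c i = v

/-- Reachability inside a set `S` (paths are required to stay in `S`). -/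
inductive ReachIn (G : LGraph p) (S : Set G.V) : G.V → G.V → Prop
  | refl {a} (ha : a ∈ S) : ReachIn G S a a
  | tail {a b c} : ReachIn G S a b → G.adj b c → c ∈ S → ReachIn G S a c

/-- The set `S` induces a connected subgraph. -/
def ConnectedIn (G : LGraph p) (S : Set G.V) : Prop :=
  ∀ a ∈ S, ∀ b ∈ S, G.ReachIn S a b

/-- `G` is connected. -/
def Connected (G : LGraph p) : Prop := ∀ a b : G.V, ∃ r, G.within a r b

end LGraph

/-! #### Ego-rank -/

/-- Transitive closure of a partial map `dep` (so `DepCl dep w x` means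
`x ∈ deps(w) = {dep(w), dep(dep(w)), …} \ {⊥}`). -/
inductive DepCl {V : Type} (dep : V → Option V) : V → V → Prop
  | base {w x} : dep w = some x → DepCl dep w x
  | step {w x y} : DepCl dep w x → dep x = some y → DepCl dep w y

/-- `deps(w)` as a set. -/
def deps {V : Type} (dep : V → Option V) (w : V) : Set V := {x | DepCl dep w x}

/-- `dep` is a dependency function for the rooted graph `(G,v)`. -/
def IsDepFun {p : ℕ} (G : LGraph p) (v : G.V) (dep : G.V → Option G.V) : Prop :=
  dep v = none ∧
  (∀ {w u}, G.adj w u → dep w = dep u ∨ w ∈ deps dep u ∨ u ∈ deps dep w) ∧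
  (∀ o : Option G.V, ¬ G.CycleIn {w | dep w = o})

/-- The node rank of a node: `|deps(w)|`. -/
noncomputable def nodeRank {V : Type} (dep : V → Option V) (w : V) : ℕ :=
  Nat.card {x // DepCl dep w x}

/-- Ego-rank: the smallest achievable maximum node rank over all dependency
functions. -/
noncomputable def egoRank {p : ℕ} (G : LGraph p) (v : G.V) : ℕ :=
  sInf {k | ∃ dep, IsDepFun G v dep ∧ ∀ w, nodeRank dep w ≤ k}

/-! #### Tree decompositions and tree-width -/

/-- A tree decomposition of `G`: a (connected, acyclic) tree `T` with bags
covering all nodes and edges, such that each node's bags form a connected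
subtree. -/
structure TreeDecomp (p : ℕ) (G : LGraph p) : Type 1 where
  T : LGraph 0
  conn : T.Connected
  acyc : T.Acyclic
  bag : T.V → Set G.V
  cover_v : ∀ u : G.V, ∃ t, u ∈ bag t
  cover_e : ∀ {u w : G.V}, G.adj u w → ∃ t, u ∈ bag t ∧ w ∈ bag t
  subtree : ∀ u : G.V, T.ConnectedIn {t | u ∈ bag t}

/-- Tree-width: minimum over tree decompositions of (maximum bag size − 1). -/
noncomputable def treewidth {p : ℕ} (G : LGraph p) : ℕ :=
  sInf {w | ∃ D : TreeDecomp p G, ∀ t, Nat.card (D.bag t) ≤ w + 1}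
/-! ### Special graphs: cycles, disjoint unions, grids (all labels empty) -/

/-- The cycle graph `C_n` (for `n ≥ 3`), with empty node labels. -/
def cycleGraph (p n : ℕ) : LGraph p where
  V := Fin n
  fintypeV := inferInstance
  decEqV := inferInstance
  adj i j := i ≠ j ∧ ((i.val + 1) % n = j.val ∨ (j.val + 1) % n = i.val)
  symm h := ⟨h.1.symm, h.2.symm⟩
  irrefl _ h := h.1 rfl
  lab _ _ := False

/-- Disjoint union of two graphs. -/
def LGraph.disjUnion {p : ℕ} (G1 G2 : LGraph p) : LGraph p where
  V := G1.V ⊕ G2.V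
  fintypeV := inferInstance
  decEqV := inferInstance
  adj a b :=
    match a, b with
    | .inl x, .inl y => G1.adj x y
    | .inr x, .inr y => G2.adj x y
    | _, _ => False
  symm {a b} h := by
    cases a <;> cases b <;> simp_all <;> first | exact G1.symm h | exact G2.symm h
  irrefl a h := by
    cases a
    · exact G1.irrefl _ h
    · exact G2.irrefl _ h
  lab a i :=
    match a with
    | .inl x => G1.lab x i
    | .inr x => G2.lab x i

/-- The `n × 2` grid graph, with empty node labels. -/
def gridGraph (p n : ℕ) : LGraph p where
  V := Fin n × Fin 2
  fintypeV := inferInstance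
  decEqV := inferInstance
  adj a b := (a.2 = b.2 ∧ (a.1.val + 1 = b.1.val ∨ b.1.val + 1 = a.1.val)) ∨
    (a.1 = b.1 ∧ a.2 ≠ b.2)
  symm h := by
    rcases h with ⟨h1, h2⟩ | ⟨h1, h2⟩
    · exact Or.inl ⟨h1.symm, h2.symm⟩
    · exact Or.inr ⟨h1.symm, h2.symm⟩
  irrefl a h := by
    rcases h with ⟨_, h2 | h2⟩ | ⟨_, h2⟩
    · omega
    · omega
    · exact h2 rfl
  lab _ _ := False
/-! ### The witness graphs of Rattan–Seppelt: a central 4-cycle with attached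
triangles and 6-cycles. -/

/-- Vertex type: 4 square nodes, 4 triangles (3 nodes each), 4 hexagons
(6 nodes each). -/
abbrev RSV : Type := Fin 4 ⊕ (Fin 4 × Fin 3) ⊕ (Fin 4 × Fin 6)

/-- Adjacency, parameterized by the owner (square corner) of each triangle and
of each hexagon: the square is a 4-cycle; each triangle/hexagon is complete to
its owner; triangles are 3-cycles, hexagons are 6-cycles. -/
def rsAdj (tO hO : Fin 4 → Fin 4) : RSV → RSV → Prop
  | .inl a, .inl b => a ≠ b ∧ ((a.val + 1) % 4 = b.val ∨ (b.val + 1) % 4 = a.val)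
  | .inl a, .inr (.inl (t, _)) => a = tO t
  | .inr (.inl (t, _)), .inl a => a = tO t
  | .inl a, .inr (.inr (s, _)) => a = hO s
  | .inr (.inr (s, _)), .inl a => a = hO s
  | .inr (.inl (t, i)), .inr (.inl (t', i')) => t = t' ∧ i ≠ i'
  | .inr (.inr (s, j)), .inr (.inr (s', j')) =>
      s = s' ∧ ((j.val + 1) % 6 = j'.val ∨ (j'.val + 1) % 6 = j.val)
  | _, _ => False

def rsGraph (p : ℕ) (tO hO : Fin 4 → Fin 4) : LGraph p where
  V := RSV
  fintypeV := inferInstance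
  decEqV := inferInstance
  adj := rsAdj tO hO
  symm {u v} h := by
    rcases u with a | ⟨t, i⟩ | ⟨s, j⟩ <;> rcases v with b | ⟨t', i'⟩ | ⟨s', j'⟩ <;>
      simp only [rsAdj] at h ⊢ <;> tauto
  irrefl u h := by
    rcases u with a | ⟨t, i⟩ | ⟨s, j⟩ <;> simp only [rsAdj] at h <;> omega
  lab _ _ := False

/-- `G`: triangles attached to `u₁` (index 0) and `u₄` (index 3), hexagons to
`u₂` (index 1) and `u₃` (index 2). -/
def rsG (p : ℕ) : LGraph p :=
  rsGraph p (fun t => if t.val < 2 then 0 else 3) (fun s => if s.val < 2 then 1 else 2)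

/-- `G'`: triangles attached to the opposite corners `u₁` (index 0) and `u₃`
(index 2), hexagons to `u₂` (index 1) and `u₄` (index 3). -/
def rsG' (p : ℕ) : LGraph p :=
  rsGraph p (fun t => if t.val < 2 then 0 else 2) (fun s => if s.val < 2 then 1 else 3)
/-! ### Graph-level separation by node classifiers -/

/-- `G ≡_{GNN} G'`: for every GNN node classifier, the multisets of classifier
values over all nodes coincide. -/
noncomputable def gnnGraphEquiv (p : ℕ) (G G' : LGraph p) : Prop :=
  ∀ A : GNN p 1, Finset.univ.val.map (A.cls G) = Finset.univ.val.map (A.cls G')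

/-- `G ≡_{HE-GNN-(d)} G'`: for every HE-GNN node classifier of nesting depth
`d`, the multisets of classifier values over all nodes coincide. -/
noncomputable def hegnnGraphEquiv (p d : ℕ) (G G' : LGraph p) : Prop :=
  ∀ A : HEGNN d p 1, Finset.univ.val.map (A.cls G) = Finset.univ.val.map (A.cls G')

/-- The eccentricity of `u` in `G`: the maximal distance from `u` to any node. -/
noncomputable def LGraph.eccFrom {p : ℕ} (G : LGraph p) (u : G.V) : ℕ :=
  Finset.univ.sup (fun w => sInf {r | G.within u r w})

/-!
Marked graphs carry the first `n` variables of an assignment as `n` extra indicator features,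
so that `↓_{W^r} x` binding a fresh variable is exactly one nesting level of a HES-GNN: the inner
network runs on `G_v^r` with `v` marked as the new variable.

GNNs cannot separate more than the logic: on the disjoint union of the two graphs the node sets
definable by `GML(↓^d_{W^r})`-formulas form a finite Boolean algebra closed under the counting
modalities `◇^{≥k}`, so two nodes it does not separate see the same multiset of neighbour
embeddings in every layer; by induction on `d` the same holds for the inner runs, since the
inner run at `v` is determined by the `↓_{W^r}`-formulas true at `v`.

The logic cannot separate more than GNNs: a formula becomes a plain `GML` formula over atoms for
the labels, the marks and its outermost `↓_{W^r}`-subformulas; an inner HES-GNN of depth `d - 1`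
computes the latter, and a GNN evaluates finitely many `GML` formulas by keeping one truth value
per subformula and iterating height-many rounds of counting aggregation.
-/

noncomputable def truthValue (P : Prop) : ℝ := if P then 1 else 0

@[simp]
lemma truthValue_eq_one {P : Prop} : truthValue P = 1 ↔ P := by
  unfold truthValue; split_ifs <;> simp_all

@[simp]
lemma truthValue_pos {P : Prop} : 0 < truthValue P ↔ P := by
  unfold truthValue; split_ifs <;> simp_all

@[simp]
lemma truthValue_true : truthValue True = 1 := if_pos trivial

lemma truthValue_congr {P Q : Prop} (h : P ↔ Q) : truthValue P = truthValue Q := by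
  rw [h]

lemma ite_eq_truthValue (P : Prop) [Decidable P] : (if P then (1 : ℝ) else 0) = truthValue P := by
  unfold truthValue; congr

lemma restrictAssign_eq_some_iff {p : ℕ} {G : LGraph p} {S : Set G.V} (g : ℕ → Option G.V)
    (y : ℕ) (u : (G.induce S).V) : restrictAssign S g y = some u ↔ g y = some u.1 := by
  rcases u with ⟨u, hu⟩
  cases hy : g y with
  | none => simp [restrictAssign, hy]
  | some w =>
    by_cases hw : w ∈ S
    · simp only [restrictAssign, hy, Option.bind_some, dif_pos hw]
      exact ⟨fun h => by cases h; rfl, fun h => by cases h; rfl⟩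
    · simp only [restrictAssign, hy, Option.bind_some, dif_neg hw, reduceCtorEq, false_iff]
      rintro ⟨⟩
      exact hw hu

namespace LGraph

variable {p : ℕ}

lemma card_filter_nbrFinset (G : LGraph p) (v : G.V) (P : G.V → Prop) :
    ((G.nbrFinset v).filter P).card = Nat.card {u : G.V // G.adj v u ∧ P u} := by
  rw [Nat.card_eq_fintype_card, Fintype.card_subtype, nbrFinset, Finset.filter_filter]

lemma nbrFinset_disjUnion_inl (G G' : LGraph p) (u : G.V) :
    (G.disjUnion G').nbrFinset (.inl u) = (G.nbrFinset u).map (.inl (β := G'.V)) := by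
  show Finset.univ.filter (fun y : G.V ⊕ G'.V => (G.disjUnion G').adj (.inl u) y) = _
  ext (w | w) <;> rw [Finset.mem_filter] <;> simp [nbrFinset, disjUnion]

lemma nbrFinset_disjUnion_inr (G G' : LGraph p) (u : G'.V) :
    (G.disjUnion G').nbrFinset (.inr u) = (G'.nbrFinset u).map (.inr (α := G.V)) := by
  show Finset.univ.filter (fun y : G.V ⊕ G'.V => (G.disjUnion G').adj (.inr u) y) = _
  ext (w | w) <;> rw [Finset.mem_filter] <;> simp [nbrFinset, disjUnion]

/-- The assignment under which `↓_{W^r} x. φ` evaluates its body at `v`. -/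
noncomputable def ballAssign (G : LGraph p) (g : ℕ → Option G.V) (x : ℕ) (v : G.V) (r : ℕ) :
    ℕ → Option (G.ball v r).V :=
  restrictAssign _ (Function.update g x (some v))

lemma ballAssign_eq_some_iff {G : LGraph p} {g : ℕ → Option G.V} {x : ℕ} {v : G.V} {r y : ℕ}
    {u : (G.ball v r).V} :
    G.ballAssign g x v r y = some u ↔ Function.update g x (some v) y = some u.1 :=
  restrictAssign_eq_some_iff _ _ _

/-- Multi-hot labels followed by one indicator coordinate for each variable `0, …, n - 1`. -/
noncomputable def embMarked (G : LGraph p) (n : ℕ) (g : ℕ → Option G.V) (u : G.V) :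
    Fin (p + n) → ℝ :=
  Fin.append (fun i => truthValue (G.lab u i)) (fun i : Fin n => truthValue (g i = some u))

lemma embMarked_zero (G : LGraph p) (g : ℕ → Option G.V) : G.embMarked 0 g = G.embG := by
  funext u
  rw [embMarked, Fin.append_right_nil _ _ rfl]
  rfl

lemma embMarked_ball (G : LGraph p) (n : ℕ) (g : ℕ → Option G.V) (v : G.V) (r : ℕ) :
    (fun u : (G.ball v r).V =>
      Fin.append (G.embMarked n g u.1) (fun _ : Fin 1 => if u.1 = v then (1 : ℝ) else 0)) =
      (G.ball v r).embMarked (n + 1) (G.ballAssign g n v r) := by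
  funext u
  have hmarks : (fun i : Fin (n + 1) => truthValue (G.ballAssign g n v r i = some u)) =
      Fin.snoc (fun i : Fin n => truthValue (g i = some u.1)) (truthValue (u.1 = v)) := by
    funext i
    rw [truthValue_congr ballAssign_eq_some_iff]
    refine Fin.lastCases ?_ (fun i => ?_) i
    · simp [eq_comm]
    · simp [i.isLt.ne]
  change _ = Fin.append (fun i => truthValue (G.lab u.1 i))
    (fun i : Fin (n + 1) => truthValue (G.ballAssign g n v r i = some u))
  rw [hmarks, Fin.append_snoc, Fin.append_right_eq_snoc, embMarked, ite_eq_truthValue]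

end LGraph

lemma HESGNN.run_nest_embMarked {p d n D'' D' : ℕ} (r : ℕ) (B : HESGNN d (p + n + 1) D'')
    (C : GNN (p + n + D'') D') (G : LGraph p) (g : ℕ → Option G.V) :
    (HESGNN.nest r B C).run G (G.embMarked n g) = C.run G (fun v => Fin.append (G.embMarked n g v)
      (B.run (G.ball v r) ((G.ball v r).embMarked (n + 1) (G.ballAssign g n v r))
        (G.ballCenter v r))) := by
  simp only [HESGNN.run, LGraph.embMarked_ball]

namespace BooleanSubalgebra

variable {X : Type*} (L : BooleanSubalgebra (Set X))

def Indist (a b : X) : Prop := ∀ s ∈ L, a ∈ s ↔ b ∈ s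

theorem mem_of_indist_closed [Finite X] {s : Set X}
    (hs : ∀ a b, L.Indist a b → a ∈ s → b ∈ s) : s ∈ L := by
  have separate : ∀ a b, ∃ t ∈ L, a ∈ t ∧ (b ∈ t → L.Indist a b) := by
    intro a b
    by_cases h : L.Indist a b
    · exact ⟨⊤, L.top_mem, trivial, fun _ => h⟩
    obtain ⟨t, ht, hab⟩ : ∃ t ∈ L, ¬ (a ∈ t ↔ b ∈ t) := by simpa [Indist] using h
    by_cases ha : a ∈ t
    · exact ⟨t, ht, ha, fun hb => (hab ⟨fun _ => hb, fun _ => ha⟩).elim⟩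
    · exact ⟨tᶜ, L.compl_mem ht, ha, fun hb => (hab ⟨fun h => (ha h).elim, (hb · |>.elim)⟩).elim⟩
  choose T hTL haT hTb using separate
  have hs_eq : s = ⋃ a : s, ⋂ b, T a b := by
    ext x
    simp only [Set.mem_iUnion, Set.mem_iInter]
    exact ⟨fun hx => ⟨⟨x, hx⟩, haT x⟩, fun ⟨a, ha⟩ => hs a x (hTb a x (ha x)) a.2⟩
  rw [hs_eq]
  exact L.iSup_mem fun a => L.iInf_mem fun b => hTL a b

end BooleanSubalgebra

namespace LGraph

variable {p : ℕ} {G : LGraph p}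

variable (G) in
def CountingClosed (L : BooleanSubalgebra (Set G.V)) : Prop :=
  ∀ s ∈ L, ∀ k : ℕ, {v | k ≤ ((G.nbrFinset v).filter (· ∈ s)).card} ∈ L

theorem map_nbrFinset_eq_of_indist {L : BooleanSubalgebra (Set G.V)} (hL : G.CountingClosed L)
    {β : Type*} {E : G.V → β} (hE : ∀ a b, L.Indist a b → E a = E b) {a b : G.V}
    (hab : L.Indist a b) : (G.nbrFinset a).val.map E = (G.nbrFinset b).val.map E := by
  ext z
  rw [Multiset.count_map, Multiset.count_map]
  have hz : {x | z = E x} ∈ L := L.mem_of_indist_closed fun x y hxy hx => hx.trans (hE x y hxy)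
  let c x := ((G.nbrFinset x).filter (· ∈ {x | z = E x})).card
  have hcount : c a = c b := le_antisymm
    ((hab _ (hL _ hz (c a))).1 (show c a ≤ c a from le_rfl))
    ((hab _ (hL _ hz (c b))).2 (show c b ≤ c b from le_rfl))
  simpa only [c, Finset.card_def, Finset.filter_val, Set.mem_ofPred_eq] using hcount

end LGraph

section Indist

variable {p D D' : ℕ}

theorem GNNLayer.apply_eq_of_indist {G : LGraph p} {L : BooleanSubalgebra (Set G.V)}
    (hL : G.CountingClosed L) (l : GNNLayer D D') {e : G.V → Fin D → ℝ}
    (he : ∀ a b, L.Indist a b → e a = e b) {a b : G.V} (hab : L.Indist a b) :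
    l.apply G e a = l.apply G e b := by
  simp only [GNNLayer.apply, he a b hab, LGraph.map_nbrFinset_eq_of_indist hL he hab]

theorem GNN.run_eq_of_indist {G : LGraph p} {L : BooleanSubalgebra (Set G.V)}
    (hL : G.CountingClosed L) (N : GNN D D') {e : G.V → Fin D → ℝ}
    (he : ∀ a b, L.Indist a b → e a = e b) {a b : G.V} (hab : L.Indist a b) :
    N.run G e a = N.run G e b := by
  induction N with
  | last l => exact l.apply_eq_of_indist hL he hab
  | cons l rest ih => exact ih fun a b hab => l.apply_eq_of_indist hL he hab

lemma GNNLayer.apply_disjUnion (l : GNNLayer D D') (G G' : LGraph p)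
    (e : G.V → Fin D → ℝ) (e' : G'.V → Fin D → ℝ) :
    l.apply (G.disjUnion G') (Sum.elim e e') = Sum.elim (l.apply G e) (l.apply G' e') := by
  funext x
  rcases x with u | u
  · simp only [GNNLayer.apply]
    rw [LGraph.nbrFinset_disjUnion_inl, Finset.map_val]
    erw [Multiset.map_map]
    rfl
  · simp only [GNNLayer.apply]
    rw [LGraph.nbrFinset_disjUnion_inr, Finset.map_val]
    erw [Multiset.map_map]
    rfl

lemma GNN.run_disjUnion (N : GNN D D') (G G' : LGraph p)
    (e : G.V → Fin D → ℝ) (e' : G'.V → Fin D → ℝ) :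
    N.run (G.disjUnion G') (Sum.elim e e') = Sum.elim (N.run G e) (N.run G' e') := by
  induction N with
  | last l => exact l.apply_disjUnion G G' e e'
  | cons l rest ih => simp only [GNN.run]; rw [GNNLayer.apply_disjUnion, ih]

theorem GNN.run_eq_of_indist_disjUnion {G G' : LGraph p}
    {L : BooleanSubalgebra (Set (G.disjUnion G').V)} (hL : (G.disjUnion G').CountingClosed L)
    (N : GNN D D') {e : G.V → Fin D → ℝ} {e' : G'.V → Fin D → ℝ}
    (he : ∀ x y, L.Indist x y → Sum.elim e e' x = Sum.elim e e' y) {u : G.V} {u' : G'.V}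
    (hu : L.Indist (.inl u) (.inr u')) : N.run G e u = N.run G' e' u' := by
  have := N.run_eq_of_indist hL he hu
  rwa [GNN.run_disjUnion] at this

end Indist

namespace GMLW

variable {p : ℕ}

def Bounded (r d n : ℕ) (φ : GMLW p) : Prop :=
  φ.radIs r ∧ φ.bindDepth ≤ d ∧ φ.free ⊆ Set.Iio n

section Bounded

variable {r d n : ℕ} {φ ψ : GMLW p}

lemma bounded_prop (i : Fin p) : (prop i).Bounded r d n :=
  ⟨trivial, Nat.zero_le _, Set.empty_subset _⟩

lemma bounded_var {y : ℕ} (hy : y < n) : (var y : GMLW p).Bounded r d n :=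
  ⟨trivial, Nat.zero_le _, Set.singleton_subset_iff.2 hy⟩

lemma bounded_top : (top : GMLW p).Bounded r d n :=
  ⟨trivial, Nat.zero_le _, Set.empty_subset _⟩

lemma Bounded.and (hφ : φ.Bounded r d n) (hψ : ψ.Bounded r d n) : (φ.and ψ).Bounded r d n :=
  ⟨⟨hφ.1, hψ.1⟩, max_le hφ.2.1 hψ.2.1, Set.union_subset hφ.2.2 hψ.2.2⟩

lemma Bounded.not (hφ : φ.Bounded r d n) : φ.not.Bounded r d n := hφ

lemma Bounded.dia (hφ : φ.Bounded r d n) (k : ℕ) : (φ.dia k).Bounded r d n := hφ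

lemma Bounded.bindW (hφ : φ.Bounded r d (n + 1)) : (bindW n r φ).Bounded r (d + 1) n :=
  ⟨⟨rfl, hφ.1⟩, Nat.succ_le_succ hφ.2.1,
    fun _ ⟨hy, hyn⟩ => lt_of_le_of_ne (Nat.le_of_lt_succ (hφ.2.2 hy)) hyn⟩

lemma bounded_zero_iff : φ.Bounded r d 0 ↔ φ.Sentence ∧ φ.radIs r ∧ φ.bindDepth ≤ d := by
  simp [Bounded, Sentence, Set.subset_empty_iff, and_comm, and_left_comm]

end Bounded

def satUnion (φ : GMLW p) (G G' : LGraph p) (g : ℕ → Option G.V) (g' : ℕ → Option G'.V) :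
    Set (G.disjUnion G').V :=
  Sum.elim (φ.sat G g) (φ.sat G' g')

section Definable

variable {r d n : ℕ} {G G' : LGraph p} {g : ℕ → Option G.V} {g' : ℕ → Option G'.V}
  {φ ψ : GMLW p}

lemma satUnion_and : (φ.and ψ).satUnion G G' g g' = φ.satUnion G G' g g' ∩ ψ.satUnion G G' g g' :=
  Set.ext fun x => by cases x <;> exact Iff.rfl

lemma satUnion_not : φ.not.satUnion G G' g g' = (φ.satUnion G G' g g')ᶜ :=
  Set.ext fun x => by cases x <;> exact Iff.rfl

lemma satUnion_top : (top : GMLW p).satUnion G G' g g' = Set.univ :=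
  Set.ext fun x => by cases x <;> exact iff_of_true trivial trivial

variable (r d n G G' g g') in
noncomputable def definableSets : BooleanSubalgebra (Set (G.disjUnion G').V) where
  carrier := {s | ∃ φ : GMLW p, φ.Bounded r d n ∧ φ.satUnion G G' g g' = s}
  supClosed' := by
    rintro _ ⟨φ, hφ, rfl⟩ _ ⟨ψ, hψ, rfl⟩
    refine ⟨.not (.and (.not φ) (.not ψ)), (hφ.not.and hψ.not).not, ?_⟩
    rw [satUnion_not, satUnion_and, satUnion_not, satUnion_not, ← Set.compl_union, compl_compl]
    rfl
  infClosed' := by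
    rintro _ ⟨φ, hφ, rfl⟩ _ ⟨ψ, hψ, rfl⟩
    exact ⟨.and φ ψ, hφ.and hψ, satUnion_and⟩
  compl_mem' := by
    rintro _ ⟨φ, hφ, rfl⟩
    exact ⟨.not φ, hφ.not, satUnion_not⟩
  bot_mem' := ⟨.not .top, bounded_top.not, by rw [satUnion_not, satUnion_top, Set.compl_univ]; rfl⟩

lemma indist_definableSets_iff {x y : (G.disjUnion G').V} :
    (definableSets r d n G G' g g').Indist x y ↔
      ∀ φ : GMLW p, φ.Bounded r d n → (x ∈ φ.satUnion G G' g g' ↔ y ∈ φ.satUnion G G' g g') :=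
  ⟨fun h φ hφ => h _ ⟨φ, hφ, rfl⟩, by rintro h _ ⟨φ, hφ, rfl⟩; exact h φ hφ⟩

lemma countingClosed_definableSets :
    (G.disjUnion G').CountingClosed (definableSets r d n G G' g g') := by
  rintro _ ⟨φ, hφ, rfl⟩ k
  refine ⟨φ.dia k, hφ.dia k, Set.ext fun x => ?_⟩
  rcases x with u | u
  · show k ≤ Nat.card {w // G.adj u w ∧ φ.sat G g w} ↔
      k ≤ (((G.disjUnion G').nbrFinset (.inl u)).filter (· ∈ φ.satUnion G G' g g')).card
    rw [LGraph.nbrFinset_disjUnion_inl]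
    erw [Finset.filter_map, Finset.card_map, ← LGraph.card_filter_nbrFinset]
    rfl
  · show k ≤ Nat.card {w // G'.adj u w ∧ φ.sat G' g' w} ↔
      k ≤ (((G.disjUnion G').nbrFinset (.inr u)).filter (· ∈ φ.satUnion G G' g g')).card
    rw [LGraph.nbrFinset_disjUnion_inr]
    erw [Finset.filter_map, Finset.card_map, ← LGraph.card_filter_nbrFinset]
    rfl

lemma embMarked_eq_of_indist {x y : (G.disjUnion G').V}
    (hxy : (definableSets r d n G G' g g').Indist x y) :
    Sum.elim (G.embMarked n g) (G'.embMarked n g') x =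
      Sum.elim (G.embMarked n g) (G'.embMarked n g') y := by
  have hfeat : ∀ z : (G.disjUnion G').V, Sum.elim (G.embMarked n g) (G'.embMarked n g') z =
      Fin.append (fun i => truthValue (z ∈ (prop i).satUnion G G' g g'))
        (fun i : Fin n => truthValue (z ∈ (var i : GMLW p).satUnion G G' g g')) := by
    rintro (z | z) <;> rfl
  have h := indist_definableSets_iff.1 hxy
  rw [hfeat, hfeat]
  congr 1 <;> funext i
  · exact truthValue_congr (h _ (bounded_prop i))
  · exact truthValue_congr (h _ (bounded_var i.isLt))

end Definable

end GMLW

open GMLW in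
theorem HESGNN.run_eq_of_bounded_sat_iff {p r : ℕ} (d : ℕ) : ∀ {n D' : ℕ}
    (A : HESGNN d (p + n) D'), A.radIs r →
    ∀ (G G' : LGraph p) (g : ℕ → Option G.V) (g' : ℕ → Option G'.V) (u : G.V) (u' : G'.V),
    (∀ φ : GMLW p, φ.Bounded r d n → (φ.sat G g u ↔ φ.sat G' g' u')) →
      A.run G (G.embMarked n g) u = A.run G' (G'.embMarked n g') u' := by
  induction d with
  | zero =>
    intro n D' A _ G G' g g' u u' h
    cases A with | base N =>
    exact N.run_eq_of_indist_disjUnion countingClosed_definableSets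
      (fun x y => embMarked_eq_of_indist) (indist_definableSets_iff.2 h)
  | succ d ih =>
    intro n D' A hA G G' g g' u u' h
    cases A with | nest s B C =>
    obtain ⟨rfl, hB⟩ := hA
    have hball : ∀ (K K' : LGraph p) (k : ℕ → Option K.V) (k' : ℕ → Option K'.V) w w',
        (∀ φ : GMLW p, φ.Bounded s (d + 1) n → (φ.sat K k w ↔ φ.sat K' k' w')) →
        B.run (K.ball w s) ((K.ball w s).embMarked (n + 1) (K.ballAssign k n w s))
            (K.ballCenter w s) =
          B.run (K'.ball w' s) ((K'.ball w' s).embMarked (n + 1) (K'.ballAssign k' n w' s))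
            (K'.ballCenter w' s) :=
      fun K K' k k' w w' hK =>
        ih B hB (K.ball w s) (K'.ball w' s) _ _ _ _ fun ψ hψ => hK _ hψ.bindW
    rw [HESGNN.run_nest_embMarked, HESGNN.run_nest_embMarked]
    refine C.run_eq_of_indist_disjUnion countingClosed_definableSets (fun x y hxy => ?_)
      (indist_definableSets_iff.2 h)
    have hxy' := indist_definableSets_iff.1 hxy
    rcases x with x | x <;> rcases y with y | y <;>
      exact congrArg₂ Fin.append (embMarked_eq_of_indist hxy) (hball _ _ _ _ _ _ hxy')

namespace GML

variable {p q : ℕ}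

def satWith (H : LGraph p) (P : H.V → Fin q → Prop) : GML q → H.V → Prop
  | .prop i, v => P v i
  | .top, _ => True
  | .and φ ψ, v => φ.satWith H P v ∧ ψ.satWith H P v
  | .not φ, v => ¬ φ.satWith H P v
  | .dia k φ, v => k ≤ Nat.card {u : H.V // H.adj v u ∧ φ.satWith H P u}

def subformulas : GML q → List (GML q)
  | .prop i => [.prop i]
  | .top => [.top]
  | .and φ ψ => .and φ ψ :: (φ.subformulas ++ ψ.subformulas)
  | .not φ => .not φ :: φ.subformulas
  | .dia k φ => .dia k φ :: φ.subformulas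

def height : GML q → ℕ
  | .prop _ => 0
  | .top => 0
  | .and φ ψ => max φ.height ψ.height + 1
  | .not φ => φ.height + 1
  | .dia _ φ => φ.height + 1

lemma mem_subformulas_self (φ : GML q) : φ ∈ φ.subformulas := by
  cases φ <;> simp [subformulas]

lemma subformulas_subset_of_mem {φ ψ : GML q} (h : ψ ∈ φ.subformulas) :
    ψ.subformulas ⊆ φ.subformulas := by
  induction φ with
  | prop i | top =>
    simp only [subformulas, List.mem_singleton] at h
    rw [h]
    exact List.Subset.refl _
  | and α β ihα ihβ =>
    simp only [subformulas, List.mem_cons, List.mem_append] at h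
    rcases h with rfl | h | h
    · exact List.Subset.refl _
    · exact List.Subset.trans (ihα h) fun θ hθ => by simp [subformulas, hθ]
    · exact List.Subset.trans (ihβ h) fun θ hθ => by simp [subformulas, hθ]
  | not α ih | dia _ α ih =>
    simp only [subformulas, List.mem_cons] at h
    rcases h with rfl | h
    · exact List.Subset.refl _
    · exact List.Subset.trans (ih h) fun θ hθ => by simp [subformulas, hθ]

end GML

def GNN.iterCons {D D' : ℕ} (l : GNNLayer D D) : ℕ → GNN D D' → GNN D D'
  | 0, N => N
  | k + 1, N => .cons l (iterCons l k N)

lemma GNN.run_iterCons {p D D' : ℕ} (l : GNNLayer D D) (k : ℕ) (N : GNN D D')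
    (H : LGraph p) (e : H.V → Fin D → ℝ) :
    (iterCons l k N).run H e = N.run H ((l.apply H)^[k] e) := by
  induction k generalizing e with
  | zero => rfl
  | succ k ih => exact ih (l.apply H e)

namespace GML

variable {p q : ℕ} (SF : List (GML q))

/-! The evaluating GNN keeps in coordinate `j` the truth value of `SF[j]`; its aggregation counts,
coordinatewise, the neighbours whose coordinate is `1`. -/

noncomputable def readSlot (y : Fin SF.length → ℝ) (φ : GML q) : ℝ :=
  if h : SF.idxOf φ < SF.length then y ⟨_, h⟩ else 0

noncomputable def initSlot (x : Fin q → ℝ) : GML q → ℝ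
  | .prop i => truthValue (x i = 1)
  | .top => 1
  | _ => 0

noncomputable def updateSlot (self cnt : Fin SF.length → ℝ) (j : Fin SF.length) : ℝ :=
  match SF[j] with
  | .prop _ => self j
  | .top => 1
  | .and φ ψ => truthValue (readSlot SF self φ = 1 ∧ readSlot SF self ψ = 1)
  | .not φ => truthValue (readSlot SF self φ ≠ 1)
  | .dia k φ => truthValue ((k : ℝ) ≤ readSlot SF cnt φ)

noncomputable def evalInLayer : GNNLayer q SF.length where
  agg _ := 0
  com z j := initSlot (fun i => z (Fin.castAdd q i)) SF[j]

noncomputable def evalStepLayer : GNNLayer SF.length SF.length where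
  agg M j := ((M.filter fun y => y j = 1).card : ℝ)
  com z j := updateSlot SF (fun i => z (Fin.castAdd _ i)) (fun i => z (Fin.natAdd _ i)) j

noncomputable def evalOutLayer {m : ℕ} (Θ : Fin m → GML q) : GNNLayer SF.length m where
  agg _ := 0
  com z j := readSlot SF (fun i => z (Fin.castAdd _ i)) (Θ j)

lemma exists_readSlot_eq {φ : GML q} (h : φ ∈ SF) :
    ∃ j : Fin SF.length, SF[j] = φ ∧ ∀ y, readSlot SF y φ = y j :=
  ⟨⟨_, List.idxOf_lt_length_of_mem h⟩, by simp, fun _ => dif_pos _⟩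

variable {SF}

lemma evalInLayer_apply (H : LGraph p) (x : H.V → Fin q → ℝ) (v : H.V) (j : Fin SF.length) :
    (evalInLayer SF).apply H x v j = initSlot (x v) SF[j] := by
  simp only [GNNLayer.apply, evalInLayer, Fin.append_left]

lemma evalStepLayer_apply (H : LGraph p) (e : H.V → Fin SF.length → ℝ) (v : H.V)
    (j : Fin SF.length) :
    (evalStepLayer SF).apply H e v j =
      updateSlot SF (e v) (fun i => ((H.nbrFinset v).filter fun u => e u i = 1).card) j := by
  simp only [GNNLayer.apply, evalStepLayer, Fin.append_left, Fin.append_right,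
    Multiset.filter_map, Multiset.card_map]
  rfl

lemma evalStepLayer_iterate_apply (hSF : ∀ φ ∈ SF, φ.subformulas ⊆ SF) (H : LGraph p)
    (x : H.V → Fin q → ℝ) (t : ℕ) (j : Fin SF.length) (hj : SF[j].height ≤ t) (v : H.V) :
    ((evalStepLayer SF).apply H)^[t] ((evalInLayer SF).apply H x) v j =
      truthValue (SF[j].satWith H (fun u i => x u i = 1) v) := by
  induction t generalizing j v with
  | zero =>
    rw [Function.iterate_zero_apply, evalInLayer_apply]
    cases hφ : SF[j] <;> simp_all [height, initSlot, satWith]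
  | succ t ih =>
    rw [Function.iterate_succ_apply', evalStepLayer_apply]
    set e := ((evalStepLayer SF).apply H)^[t] ((evalInLayer SF).apply H x)
    have hsub : ∀ φ ∈ SF[j].subformulas, φ.height ≤ t → ∃ j' : Fin SF.length,
        (∀ y, readSlot SF y φ = y j') ∧
        ∀ u, e u j' = truthValue (φ.satWith H (fun u i => x u i = 1) u) := by
      intro φ hφ hφt
      obtain ⟨j', hj', hslot⟩ := exists_readSlot_eq SF (hSF _ (List.getElem_mem j.isLt) hφ)
      exact ⟨j', hslot, fun u => hj' ▸ ih j' (hj' ▸ hφt) u⟩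
    cases hφ : SF[j] with
    | prop i => simpa [updateSlot, hφ] using ih j (by simp [hφ, height]) v
    | top => simp [updateSlot, hφ, satWith]
    | and α β =>
      rw [hφ] at hsub hj
      simp only [height] at hj
      obtain ⟨jα, hα, heα⟩ := hsub α (by simp [subformulas, mem_subformulas_self]) (by omega)
      obtain ⟨jβ, hβ, heβ⟩ := hsub β (by simp [subformulas, mem_subformulas_self]) (by omega)
      simp [updateSlot, hφ, hα, hβ, heα, heβ, satWith]
    | not α =>
      rw [hφ] at hsub hj
      obtain ⟨jα, hα, heα⟩ := hsub α (by simp [subformulas, mem_subformulas_self])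
        (by simp only [height] at hj; omega)
      simp [updateSlot, hφ, hα, heα, satWith]
    | dia k α =>
      rw [hφ] at hsub hj
      obtain ⟨jα, hα, heα⟩ := hsub α (by simp [subformulas, mem_subformulas_self])
        (by simp only [height] at hj; omega)
      simp only [updateSlot, hφ, hα, heα, truthValue_eq_one, satWith,
        ← LGraph.card_filter_nbrFinset, Nat.cast_le]

variable (p) in
theorem exists_gnn_eval {m : ℕ} (Θ : Fin m → GML q) :
    ∃ N : GNN q m, ∀ (H : LGraph p) (x : H.V → Fin q → ℝ) (v : H.V) (j : Fin m),
      N.run H x v j = truthValue ((Θ j).satWith H (fun u i => x u i = 1) v) := by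
  let SF := (List.ofFn Θ).flatMap subformulas
  have hSF : ∀ φ ∈ SF, φ.subformulas ⊆ SF := by
    intro φ hφ
    obtain ⟨ρ, hρ, hφρ⟩ := List.mem_flatMap.mp hφ
    exact fun θ hθ => List.mem_flatMap.mpr ⟨ρ, hρ, subformulas_subset_of_mem hφρ hθ⟩
  refine ⟨.cons (evalInLayer SF) (GNN.iterCons (evalStepLayer SF) (∑ j, (Θ j).height)
    (.last (evalOutLayer SF Θ))), fun H x v j => ?_⟩
  obtain ⟨jΘ, hjΘ, hread⟩ := exists_readSlot_eq SF (List.mem_flatMap.mpr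
    ⟨Θ j, List.mem_ofFn.mpr ⟨j, rfl⟩, mem_subformulas_self _⟩)
  have hheight : SF[jΘ].height ≤ ∑ j, (Θ j).height := hjΘ ▸
    Finset.single_le_sum (f := fun j => (Θ j).height) (fun _ _ => Nat.zero_le _)
      (Finset.mem_univ j)
  simp only [GNN.run, GNN.run_iterCons, GNNLayer.apply, evalOutLayer, Fin.append_left, hread]
  rw [evalStepLayer_iterate_apply hSF H x _ jΘ hheight v, hjΘ]

end GML

namespace GMLW

variable {p : ℕ}

def reindex {V : Type} {n : ℕ} (σ : ℕ → Option (Fin n)) (g : ℕ → Option V) : ℕ → Option V :=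
  fun y => (σ y).bind fun i => g i

def extendRenaming {n : ℕ} (σ : ℕ → Option (Fin n)) (x : ℕ) : ℕ → Option (Fin (n + 1)) :=
  Function.update (fun y => (σ y).map Fin.castSucc) x (some (Fin.last n))

lemma reindex_extendRenaming {n : ℕ} (G : LGraph p) (σ : ℕ → Option (Fin n)) (x : ℕ)
    (g : ℕ → Option G.V) (v : G.V) (r : ℕ) :
    reindex (extendRenaming σ x) (G.ballAssign g n v r) = G.ballAssign (reindex σ g) x v r := by
  funext y
  refine Option.ext fun u => ?_
  simp only [reindex, LGraph.ballAssign_eq_some_iff]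
  by_cases hy : y = x
  · subst hy
    simp [extendRenaming, LGraph.ballAssign_eq_some_iff]
  · cases hσ : σ y <;>
      simp [extendRenaming, reindex, hy, hσ, LGraph.ballAssign_eq_some_iff, Nat.ne_of_lt]

/-- The outermost subformulas `↓_{W} x. ψ`, as pairs `(x, ψ)`. -/
def bindWs : GMLW p → List (ℕ × GMLW p)
  | .and φ ψ => φ.bindWs ++ ψ.bindWs
  | .not φ => φ.bindWs
  | .dia _ φ => φ.bindWs
  | .bindW x _ φ => [(x, φ)]
  | _ => []

lemma radIs_and_bindDepth_lt_of_mem_bindWs {r x : ℕ} {φ ψ : GMLW p} (h : (x, ψ) ∈ φ.bindWs)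
    (hφ : φ.radIs r) : ψ.radIs r ∧ ψ.bindDepth < φ.bindDepth := by
  induction φ with
  | prop | var | top => simp [bindWs] at h
  | and α β ihα ihβ =>
    rcases List.mem_append.1 h with h | h
    · exact (ihα h hφ.1).imp_right fun h' => lt_max_of_lt_left h'
    · exact (ihβ h hφ.2).imp_right fun h' => lt_max_of_lt_right h'
  | not α ih | dia _ α ih => exact ih h hφ
  | bindW y s α =>
    obtain ⟨rfl, rfl⟩ := List.mem_singleton.1 h
    exact ⟨hφ.2, Nat.lt_succ_self _⟩

variable {n : ℕ}

/-- Atoms: the labels, then the marks `0, …, n - 1`, then one atom for each entry `((x, ψ), σ)`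
of `Ψ`, standing for `↓_W x. ψ` read under the renaming `σ`. -/
noncomputable def toGML (Ψ : List ((ℕ × GMLW p) × (ℕ → Option (Fin n))))
    (σ : ℕ → Option (Fin n)) : GMLW p → GML (p + n + Ψ.length)
  | .prop i => .prop (Fin.castAdd _ (Fin.castAdd n i))
  | .var y =>
    match σ y with
    | some i => .prop (Fin.castAdd _ (Fin.natAdd p i))
    | none => .not .top
  | .top => .top
  | .and φ ψ => .and (toGML Ψ σ φ) (toGML Ψ σ ψ)
  | .not φ => .not (toGML Ψ σ φ)
  | .dia k φ => .dia k (toGML Ψ σ φ)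
  | .bindW x _ φ =>
    if h : ((x, φ), σ) ∈ Ψ then .prop (Fin.natAdd _ ⟨_, List.idxOf_lt_length_of_mem h⟩)
    else .not .top

lemma satWith_toGML {r : ℕ} (Ψ : List ((ℕ × GMLW p) × (ℕ → Option (Fin n)))) (G : LGraph p)
    (g : ℕ → Option G.V) (e : G.V → Fin (p + n + Ψ.length) → ℝ)
    (he_lab : ∀ u i, e u (Fin.castAdd _ (Fin.castAdd n i)) = truthValue (G.lab u i))
    (he_mark : ∀ u (i : Fin n), e u (Fin.castAdd _ (Fin.natAdd p i)) = truthValue (g i = some u))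
    (he_bind : ∀ u (k : Fin Ψ.length), e u (Fin.natAdd _ k) =
      truthValue ((bindW Ψ[k].1.1 r Ψ[k].1.2).sat G (reindex Ψ[k].2 g) u))
    (σ : ℕ → Option (Fin n)) (φ : GMLW p) (hr : φ.radIs r) (hΨ : ∀ b ∈ φ.bindWs, (b, σ) ∈ Ψ)
    (v : G.V) :
    (toGML Ψ σ φ).satWith G (fun u i => e u i = 1) v ↔ φ.sat G (reindex σ g) v := by
  induction φ generalizing v with
  | prop i => simp [toGML, GML.satWith, he_lab, GMLW.sat]
  | var y => cases hσ : σ y <;> simp [toGML, hσ, GML.satWith, he_mark, GMLW.sat, reindex]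
  | top => simp [toGML, GML.satWith, GMLW.sat]
  | and α β ihα ihβ =>
    exact and_congr (ihα hr.1 (fun b hb => hΨ b (List.mem_append_left _ hb)) v)
      (ihβ hr.2 (fun b hb => hΨ b (List.mem_append_right _ hb)) v)
  | not α ih => exact not_congr (ih hr hΨ v)
  | dia k α ih => simp only [toGML, GML.satWith, GMLW.sat, ih hr hΨ]
  | bindW x s α =>
    obtain ⟨rfl, -⟩ := hr
    have hmem : ((x, α), σ) ∈ Ψ := hΨ _ (List.mem_singleton_self _)
    have hget : Ψ[Ψ.idxOf ((x, α), σ)]'(List.idxOf_lt_length_of_mem hmem) = ((x, α), σ) :=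
      List.getElem_idxOf _
    simp only [toGML, dif_pos hmem, GML.satWith, he_bind, truthValue_eq_one, Fin.getElem_fin,
      hget]

end GMLW

open GMLW in
theorem HESGNN.exists_eval {p : ℕ} (r : ℕ) (d : ℕ) : ∀ {n m : ℕ} (Φ : Fin m → GMLW p)
    (σ : Fin m → ℕ → Option (Fin n)), (∀ j, (Φ j).radIs r ∧ (Φ j).bindDepth ≤ d) →
    ∃ A : HESGNN d (p + n) m, A.radIs r ∧ ∀ (G : LGraph p) (g : ℕ → Option G.V) (v : G.V) j,
      A.run G (G.embMarked n g) v j = truthValue ((Φ j).sat G (reindex (σ j) g) v) := by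
  induction d with
  | zero =>
    intro n m Φ σ hΦ
    obtain ⟨N, hN⟩ := GML.exists_gnn_eval p fun j => toGML [] (σ j) (Φ j)
    refine ⟨.base N, trivial, fun G g v j => ?_⟩
    refine (hN G _ v j).trans (truthValue_congr (satWith_toGML [] G g _ (fun _ _ => ?_)
      (fun _ _ => ?_) (fun _ k => k.elim0) (σ j) (Φ j) (hΦ j).1 (fun b hb => ?_) v))
    · exact Fin.append_left _ _ _
    · exact Fin.append_right _ _ _
    · have := (radIs_and_bindDepth_lt_of_mem_bindWs hb (hΦ j).1).2
      have := (hΦ j).2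
      omega
  | succ d ih =>
    intro n m Φ σ hΦ
    let Ψ := (List.finRange m).flatMap fun j => (Φ j).bindWs.map fun b => (b, σ j)
    have hΨ : ∀ k : Fin Ψ.length, Ψ[k].1.2.radIs r ∧ Ψ[k].1.2.bindDepth ≤ d := by
      intro k
      obtain ⟨j, -, hk⟩ := List.mem_flatMap.1 (List.getElem_mem k.isLt)
      obtain ⟨⟨x, ψ⟩, hb, hbk⟩ := List.mem_map.1 hk
      obtain ⟨hψr, hψd⟩ := radIs_and_bindDepth_lt_of_mem_bindWs hb (hΦ j).1
      simp only [Fin.getElem_fin, ← hbk]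
      exact ⟨hψr, Nat.le_of_lt_succ (hψd.trans_le (hΦ j).2)⟩
    obtain ⟨B, hBr, hB⟩ := ih (n := n + 1) (fun k : Fin Ψ.length => Ψ[k].1.2)
      (fun k => extendRenaming Ψ[k].2 Ψ[k].1.1) hΨ
    obtain ⟨C, hC⟩ := GML.exists_gnn_eval p fun j => toGML Ψ (σ j) (Φ j)
    refine ⟨.nest r B C, ⟨rfl, hBr⟩, fun G g v j => ?_⟩
    rw [HESGNN.run_nest_embMarked, hC]
    refine truthValue_congr (satWith_toGML Ψ G g _ (fun _ _ => ?_) (fun _ _ => ?_)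
      (fun u k => ?_) (σ j) (Φ j) (hΦ j).1 (fun b hb => ?_) v)
    · rw [Fin.append_left, LGraph.embMarked, Fin.append_left]
    · rw [Fin.append_left, LGraph.embMarked, Fin.append_right]
    · rw [Fin.append_right, hB, reindex_extendRenaming]
      rfl
    · exact List.mem_flatMap.2 ⟨j, List.mem_finRange j, List.mem_map_of_mem hb⟩

theorem HESGNN.exists_clsP_iff_satS {p r d : ℕ} (φ : GMLW p) (hr : φ.radIs r)
    (hd : φ.bindDepth ≤ d) : ∃ A : HESGNN d p 1, A.radIs r ∧ ∀ G v, A.clsP G v ↔ φ.satS G v := by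
  obtain ⟨A, hAr, hA⟩ := HESGNN.exists_eval r d (n := 0) (fun _ : Fin 1 => φ) (fun _ _ => none)
    fun _ => ⟨hr, hd⟩
  refine ⟨A, hAr, fun G v => ?_⟩
  rw [HESGNN.clsP, ← LGraph.embMarked_zero G (fun _ => none), hA, truthValue_pos]
  rfl

theorem HESGNN.clsP_iff_of_satS_iff {p r d : ℕ} (A : HESGNN d p 1) (hA : A.radIs r)
    {G G' : LGraph p} {v : G.V} {v' : G'.V}
    (h : ∀ φ : GMLW p, φ.Sentence → φ.radIs r → φ.bindDepth ≤ d → (φ.satS G v ↔ φ.satS G' v')) :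
    A.clsP G v ↔ A.clsP G' v' := by
  have hrun := HESGNN.run_eq_of_bounded_sat_iff d (n := 0) A hA G G' (fun _ => none)
    (fun _ => none) v v' fun φ hφ => by
      obtain ⟨hs, hr, hd⟩ := GMLW.bounded_zero_iff.1 hφ
      exact h φ hs hr hd
  rw [LGraph.embMarked_zero, LGraph.embMarked_zero] at hrun
  rw [HESGNN.clsP, HESGNN.clsP, hrun]

theorem hesgnn_dr_eq_gmlw_dr_general (p d r : ℕ)
    (G G' : LGraph p) (v : G.V) (v' : G'.V) :
    ((∀ A : HESGNN d p 1, A.radIs r → (A.clsP G v ↔ A.clsP G' v')) ↔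
      (∀ φ : GMLW p, φ.Sentence → φ.radIs r → φ.bindDepth ≤ d →
        (φ.satS G v ↔ φ.satS G' v'))) ∧
    ((∀ (d' : ℕ) (A : HESGNN d' p 1), A.radIs r → (A.clsP G v ↔ A.clsP G' v')) ↔
      (∀ φ : GMLW p, φ.Sentence → φ.radIs r → (φ.satS G v ↔ φ.satS G' v'))) := by
  have fixed_depth : ∀ d, (∀ A : HESGNN d p 1, A.radIs r → (A.clsP G v ↔ A.clsP G' v')) ↔
      (∀ φ : GMLW p, φ.Sentence → φ.radIs r → φ.bindDepth ≤ d →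
        (φ.satS G v ↔ φ.satS G' v')) := by
    refine fun d => ⟨fun hA φ _ hr hd => ?_, fun hφ A hA => A.clsP_iff_of_satS_iff hA hφ⟩
    obtain ⟨A, hAr, hAφ⟩ := HESGNN.exists_clsP_iff_satS φ hr hd
    rw [← hAφ, ← hAφ]
    exact hA A hAr
  exact ⟨fixed_depth d, fun hA φ hs hr => (fixed_depth φ.bindDepth).1 (hA _) φ hs hr le_rfl,
    fun hφ d' => (fixed_depth d').2 fun φ hs hr _ => hφ φ hs hr⟩

/-- For all `d ≥ 0` and `r ≥ 1`,
ρ(HES-GNN-(d,r)) = ρ(GML(↓^d_{W^r})), and moreover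
ρ(HES-GNN with radius r, any depth) = ρ(GML(↓_{W^r})). -/
theorem hesgnn_dr_eq_gmlw_dr (p d r : ℕ) (hr : 1 ≤ r)
    (G G' : LGraph p) (v : G.V) (v' : G'.V) :
    ((∀ A : HESGNN d p 1, A.radIs r → (A.clsP G v ↔ A.clsP G' v')) ↔
      (∀ φ : GMLW p, φ.Sentence → φ.radIs r → φ.bindDepth ≤ d →
        (φ.satS G v ↔ φ.satS G' v'))) ∧
    ((∀ (d' : ℕ) (A : HESGNN d' p 1), A.radIs r → (A.clsP G v ↔ A.clsP G' v')) ↔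
      (∀ φ : GMLW p, φ.Sentence → φ.radIs r → (φ.satS G v ↔ φ.satS G' v'))) :=
  hesgnn_dr_eq_gmlw_dr_general p d r G G' v v'
end

section
/- Let G, G' be graphs and let d ≥ min(|G|,|G'|). Then G ≡_{WL-IR-d} G' if and only if G and G' are isomorphic. -/
open Classical

/-! Isomorphic graphs have isomorphic IR trees, since WL colorings, color classes and
individualizations are all transported along an isomorphism.

Conversely, follow one branch of an isomorphism of IR trees. Individualizing a vertex of a
nontrivial class strictly increases the number of color classes of the stable coloring, so
within `|G|` steps both sides reach discrete stable colorings with equal color multisets.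
Matching equal colors is then a bijection. Color refinement on `n` vertices is already stable
after `n - 1` rounds, so the last round compares neighbourhood multisets of a discrete coloring,
which forces the bijection to preserve adjacency; injectivity of the hash recovers the labels. -/

namespace HashSetup

variable {p : ℕ} (H : HashSetup p)

theorem hInit_injective : Function.Injective H.hInit :=
  fun _ _ h => Sum.inl_injective (H.inj (a₁ := .inl _) (a₂ := .inl _) h)

theorem hRefine_inj {c c' : H.C} {m m' : Multiset H.C} (h : H.hRefine c m = H.hRefine c' m') :
    c = c' ∧ m = m' :=
  Prod.ext_iff.mp <| Sum.inl_injective <| Sum.inr_injective <|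
    H.inj (a₁ := .inr (.inl (c, m))) (a₂ := .inr (.inl (c', m'))) h

theorem hIndiv_inj {c c' : H.C} {P Q : Prop} (h : H.hIndiv c P = H.hIndiv c' Q) :
    c = c' ∧ (P ↔ Q) :=
  (Prod.ext_iff.mp <| Sum.inr_injective <| Sum.inr_injective <|
    H.inj (a₁ := .inr (.inr (c, P))) (a₂ := .inr (.inr (c', Q))) h).imp_right iff_of_eq

end HashSetup

section NumColors

variable {V C : Type} [Fintype V]

noncomputable def numColors (col : V → C) : ℕ :=
  (Finset.univ.image col).card

theorem one_le_numColors [Nonempty V] (col : V → C) : 1 ≤ numColors col :=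
  Finset.card_pos.mpr (Finset.univ_nonempty.image col)

theorem discrete_of_card_le_numColors {col : V → C} (h : Fintype.card V ≤ numColors col) :
    Discrete col := by
  have hinj := Finset.card_image_iff.mp (le_antisymm Finset.card_image_le h)
  exact fun u w huw => hinj (Finset.mem_univ u) (Finset.mem_univ w) huw

theorem numColors_eq_card_image_extend {fine coarse : V → C}
    (h : coarse.FactorsThrough fine) :
    numColors coarse = ((Finset.univ.image fine).image (Function.extend fine coarse id)).card := by
  rw [numColors, Finset.image_image]
  exact congrArg _ (Finset.image_congr fun v _ => (h.extend_apply id v).symm)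

theorem numColors_le_of_factorsThrough {fine coarse : V → C}
    (h : coarse.FactorsThrough fine) : numColors coarse ≤ numColors fine :=
  (numColors_eq_card_image_extend h).trans_le Finset.card_image_le

theorem numColors_lt_of_factorsThrough {fine coarse : V → C}
    (h : coarse.FactorsThrough fine) (hstrict : ¬ fine.FactorsThrough coarse) :
    numColors coarse < numColors fine := by
  refine (numColors_le_of_factorsThrough h).lt_of_ne fun heq => hstrict fun a b hab => ?_
  rw [numColors_eq_card_image_extend h] at heq
  refine Finset.card_image_iff.mp heq (Finset.mem_image_of_mem _ (Finset.mem_univ a))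
    (Finset.mem_image_of_mem _ (Finset.mem_univ b)) ?_
  simp only [h.extend_apply, hab]

end NumColors

theorem Discrete.injective {V C : Type} {col : V → C} (h : Discrete col) :
    Function.Injective col :=
  fun _ _ => h _ _

section ColorMultisets

variable {V V' C : Type} [Fintype V] [Fintype V']

theorem discrete_iff_nodup_map_univ {col : V → C} :
    Discrete col ↔ (Finset.univ.val.map col).Nodup :=
  ⟨fun h => Finset.univ.nodup.map fun _ _ huw => h _ _ huw,
    fun h u w huw =>
      Multiset.inj_on_of_nodup_map h u (Finset.mem_univ u) w (Finset.mem_univ w) huw⟩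

theorem discrete_iff_of_map_univ_eq {col : V → C} {col' : V' → C}
    (h : Finset.univ.val.map col = Finset.univ.val.map col') : Discrete col ↔ Discrete col' := by
  rw [discrete_iff_nodup_map_univ, discrete_iff_nodup_map_univ, h]

theorem card_eq_of_map_univ_eq {col : V → C} {col' : V' → C}
    (h : Finset.univ.val.map col = Finset.univ.val.map col') :
    Fintype.card V = Fintype.card V' := by
  simpa using congrArg Multiset.card h

theorem exists_equiv_of_map_univ_eq {col : V → C} {col' : V' → C} (hd : Discrete col)
    (h : Finset.univ.val.map col = Finset.univ.val.map col') :
    ∃ f : V ≃ V', ∀ v, col' (f v) = col v := by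
  have hd' := (discrete_iff_of_map_univ_eq h).mp hd
  have hrange : Set.range col = Set.range col' := by
    ext c
    simpa using congrArg (c ∈ ·) h
  refine ⟨(Equiv.ofInjective col hd.injective).trans
    ((Equiv.setCongr hrange).trans (Equiv.ofInjective col' hd'.injective).symm), fun v => ?_⟩
  exact Equiv.apply_ofInjective_symm hd'.injective _

theorem map_univ_comp_equiv (f : V ≃ V')
    {col : V → C} {col' : V' → C} (hc : ∀ v, col' (f v) = col v) :
    Finset.univ.val.map col' = Finset.univ.val.map col := by
  rw [← Finset.map_univ_equiv f, Finset.map_val, Multiset.map_map]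
  exact Multiset.map_congr rfl fun v _ => hc v

end ColorMultisets

section WeisfeilerLeman

variable {p : ℕ} (H : HashSetup p) {G G' : LGraph p}

theorem wlStep_eq_iff {col : G.V → H.C} {col' : G'.V → H.C} {v : G.V} {v' : G'.V} :
    wlStep H G col v = wlStep H G' col' v' ↔
      col v = col' v' ∧ (G.nbrFinset v).val.map col = (G'.nbrFinset v').val.map col' :=
  ⟨H.hRefine_inj, fun ⟨h₁, h₂⟩ => by rw [wlStep, wlStep, h₁, h₂]⟩

theorem eq_of_wlIter_eq {col : G.V → H.C} {col' : G'.V → H.C} {v : G.V} {v' : G'.V} :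
    ∀ {k : ℕ}, wlIter H G k col v = wlIter H G' k col' v' → col v = col' v'
  | 0, h => h
  | _ + 1, h => eq_of_wlIter_eq ((wlStep_eq_iff H).mp h).1

theorem factorsThrough_wlIter (k : ℕ) (col : G.V → H.C) :
    col.FactorsThrough (wlIter H G k col) :=
  fun _ _ => eq_of_wlIter_eq H

theorem wlStep_factorsThrough_wlStep {col coarse : G.V → H.C}
    (h : coarse.FactorsThrough col) :
    (wlStep H G coarse).FactorsThrough (wlStep H G col) := by
  intro a b hab
  obtain ⟨hcol, hnbr⟩ := (wlStep_eq_iff H).mp hab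
  refine (wlStep_eq_iff H).mpr ⟨h hcol, ?_⟩
  have hmap : ∀ v, (G.nbrFinset v).val.map coarse =
      ((G.nbrFinset v).val.map col).map (Function.extend col coarse id) := fun v => by
    rw [Multiset.map_map]
    exact Multiset.map_congr rfl fun u _ => (h.extend_apply id u).symm
  rw [hmap, hmap, hnbr]

theorem wlIter_stable_of_le {col : G.V → H.C} {i j : ℕ} (hij : i ≤ j)
    (h : (wlIter H G (i + 1) col).FactorsThrough (wlIter H G i col)) :
    (wlIter H G (j + 1) col).FactorsThrough (wlIter H G j col) := by
  induction hij with
  | refl => exact h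
  | step _ ih => exact wlStep_factorsThrough_wlStep H ih

theorem add_le_numColors_wlIter {col : G.V → H.C} {k : ℕ}
    (h : ∀ i < k, ¬ (wlIter H G (i + 1) col).FactorsThrough (wlIter H G i col)) :
    numColors col + k ≤ numColors (wlIter H G k col) := by
  induction k with
  | zero => rfl
  | succ k ih =>
    have hlt : numColors (wlIter H G k col) < numColors (wlIter H G (k + 1) col) :=
      numColors_lt_of_factorsThrough (factorsThrough_wlIter H 1 _) (h k k.lt_succ_self)
    have := ih fun i hi => h i (hi.trans k.lt_succ_self)
    omega

/-- Color refinement on `n` nodes is stable after `n - 1` rounds, since every unstable round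
adds a color class. -/
theorem discrete_wlIter_of_discrete_succ {col : G.V → H.C} {k : ℕ}
    (hk : Fintype.card G.V ≤ k + 1) (h : Discrete (wlIter H G (k + 1) col)) :
    Discrete (wlIter H G k col) := by
  by_cases hstable : (wlIter H G (k + 1) col).FactorsThrough (wlIter H G k col)
  · exact fun u w huw => h u w (hstable huw)
  rcases isEmpty_or_nonempty G.V with hV | hV
  · exact fun u => isEmptyElim u
  refine discrete_of_card_le_numColors ?_
  have := add_le_numColors_wlIter H fun i hi hi' =>
    hstable (wlIter_stable_of_le H hi.le hi')
  have := one_le_numColors col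
  omega

end WeisfeilerLeman

section Equivariance

variable {p : ℕ} {G G' : LGraph p}

theorem LGraph.nbrFinset_map_iff (f : G.V ≃ G'.V) :
    (∀ v, G'.nbrFinset (f v) = (G.nbrFinset v).map f.toEmbedding) ↔
      ∀ u v, G.adj u v ↔ G'.adj (f u) (f v) := by
  simp only [LGraph.nbrFinset, Finset.ext_iff, Finset.mem_map_equiv, Finset.mem_filter,
    Finset.mem_univ, true_and]
  exact ⟨fun h u v => by simpa using (h u (f v)).symm,
    fun h v w => by simpa using (h v (f.symm w)).symm⟩

variable (H : HashSetup p) {f : G.V ≃ G'.V}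

theorem wlStep_comp_equiv (hadj : ∀ u v, G.adj u v ↔ G'.adj (f u) (f v))
    {col : G.V → H.C} {col' : G'.V → H.C} (hc : ∀ v, col' (f v) = col v) (v : G.V) :
    wlStep H G' col' (f v) = wlStep H G col v := by
  rw [wlStep, wlStep, hc, (LGraph.nbrFinset_map_iff f).mpr hadj, Finset.map_val, Multiset.map_map]
  exact congrArg _ (Multiset.map_congr rfl fun u _ => hc u)

theorem wlIter_comp_equiv (hadj : ∀ u v, G.adj u v ↔ G'.adj (f u) (f v))
    {col : G.V → H.C} {col' : G'.V → H.C} (hc : ∀ v, col' (f v) = col v) :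
    ∀ k v, wlIter H G' k col' (f v) = wlIter H G k col v
  | 0 => hc
  | k + 1 => wlStep_comp_equiv H hadj (wlIter_comp_equiv hadj hc k)

end Equivariance

def CTree.label {C : Type} : CTree C → Multiset C
  | .node l _ => l

theorem CTree.Iso.label_eq {C : Type} {t t' : CTree C} (h : t.Iso t') : t.label = t'.label := by
  cases h; rfl

theorem CTree.Iso.exists_mem_iso {C : Type} {l l' : Multiset C} {cs cs' : List (CTree C)}
    (h : CTree.Iso (.node l cs) (.node l' cs')) {t : CTree C} (ht : t ∈ cs) :
    ∃ t' ∈ cs', t.Iso t' := by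
  cases h with
  | node e hcs =>
    obtain ⟨i, rfl⟩ := List.get_of_mem ht
    exact ⟨_, List.get_mem _ _, hcs i⟩

theorem CTree.iso_node_map_toList {C α β : Type} (l : Multiset C) {s : Finset α} {t : Finset β}
    {F : α → CTree C} {F' : β → CTree C} (e : s ≃ t) (h : ∀ x : s, (F x).Iso (F' (e x))) :
    CTree.Iso (.node l (s.toList.map F)) (.node l (t.toList.map F')) := by
  let toSubtype : ∀ {γ : Type} (u : Finset γ), Fin u.toList.length ≃ u := fun u =>
    (List.Nodup.getEquiv u.toList u.nodup_toList).trans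
      (Equiv.subtypeEquivRight fun _ => Finset.mem_toList)
  refine .node ((finCongr (List.length_map _)).trans <| (toSubtype s).trans <|
    e.trans <| (toSubtype t).symm.trans (finCongr (List.length_map _)).symm) fun i => ?_
  simpa [toSubtype] using h (toSubtype s (finCongr (List.length_map _) i))

theorem CTree.iso_leaf {C : Type} (l : Multiset C) : CTree.Iso (.node l []) (.node l []) :=
  .node (Equiv.refl _) fun i => i.elim0

attribute [local instance] HashSetup.linC

section IndividualizationRefinement

variable {p : ℕ} (H : HashSetup p) (G : LGraph p)

noncomputable def wlStable (col : G.V → H.C) : G.V → H.C :=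
  wlIter H G (Fintype.card G.V) col

variable {G} {V C : Type}

noncomputable def individualize (col : V → H.C) (w : V) : V → H.C :=
  fun v => H.hIndiv (col v) (v = w)

theorem factorsThrough_individualize (col : V → H.C) (w : V) :
    col.FactorsThrough (individualize H col w) :=
  fun _ _ h => (H.hIndiv_inj h).1

variable [Fintype V] [DecidableEq C]

noncomputable def colorClass (col : V → C) (c : C) : Finset V :=
  Finset.univ.filter (fun v => col v = c)

noncomputable def repeatedColors (M : Multiset C) : Finset C :=
  M.toFinset.filter (fun c => 1 < M.count c)

theorem card_colorClass (col : V → C) (c : C) :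
    (colorClass col c).card = (Finset.univ.val.map col).count c := by
  rw [Multiset.count_map, colorClass, Finset.card_def, Finset.filter_val]
  exact congrArg _ (Multiset.filter_congr fun _ _ => eq_comm)

theorem image_filter_eq_repeatedColors (col : V → C) :
    (Finset.univ.image col).filter (fun c => 1 < (colorClass col c).card) =
      repeatedColors (Finset.univ.val.map col) := by
  simp only [repeatedColors, card_colorClass, Multiset.toFinset_map, Finset.val_toFinset]

variable {H}

theorem WLIR_label (d : ℕ) (col : G.V → H.C) :
    (WLIR H G d col).label = colMultiset H G (wlStable H G col) := by
  cases d with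
  | zero => rfl
  | succ d =>
    simp only [WLIR]
    split_ifs <;> rfl

theorem WLIR_succ_of_discrete {d : ℕ} {col : G.V → H.C} (h : Discrete (wlStable H G col)) :
    WLIR H G (d + 1) col = .node (colMultiset H G (wlStable H G col)) [] := by
  simp only [WLIR]
  exact dif_pos h

theorem WLIR_succ_of_not_discrete {d : ℕ} {col : G.V → H.C}
    (h : ¬ Discrete (wlStable H G col)) :
    ∃ c : H.C, (repeatedColors (colMultiset H G (wlStable H G col))).min = c ∧
      WLIR H G (d + 1) col = .node (colMultiset H G (wlStable H G col))
        ((colorClass (wlStable H G col) c).toList.map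
          fun w => WLIR H G d (individualize H (wlStable H G col) w)) := by
  unfold wlStable at h ⊢
  simp only [WLIR]
  rw [dif_neg h]
  refine ⟨_, ?_, rfl⟩
  exact ((Finset.coe_min' _).trans (congrArg _ (image_filter_eq_repeatedColors _))).symm

end IndividualizationRefinement

section Soundness

variable {p : ℕ} {H : HashSetup p} {G G' : LGraph p}

theorem wlStable_comp_equiv {f : G.V ≃ G'.V} (hadj : ∀ u v, G.adj u v ↔ G'.adj (f u) (f v))
    {col : G.V → H.C} {col' : G'.V → H.C} (hc : ∀ v, col' (f v) = col v) (v : G.V) :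
    wlStable H G' col' (f v) = wlStable H G col v := by
  rw [wlStable, wlStable, ← Fintype.card_congr f]
  exact wlIter_comp_equiv H hadj hc _ v

theorem eq_of_wlStable_eq (f : G.V ≃ G'.V) {col : G.V → H.C} {col' : G'.V → H.C} {v : G.V}
    (h : wlStable H G col v = wlStable H G' col' (f v)) : col v = col' (f v) := by
  rw [wlStable, wlStable, ← Fintype.card_congr f] at h
  exact eq_of_wlIter_eq H h

theorem colMultiset_wlStable_eq_of_equiv {f : G.V ≃ G'.V}
    (hadj : ∀ u v, G.adj u v ↔ G'.adj (f u) (f v)) {col : G.V → H.C} {col' : G'.V → H.C}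
    (hc : ∀ v, col' (f v) = col v) :
    colMultiset H G (wlStable H G col) = colMultiset H G' (wlStable H G' col') :=
  (map_univ_comp_equiv f (wlStable_comp_equiv hadj hc)).symm

theorem WLIR_iso_of_equiv {f : G.V ≃ G'.V} (hadj : ∀ u v, G.adj u v ↔ G'.adj (f u) (f v))
    (d : ℕ) {col : G.V → H.C} {col' : G'.V → H.C} (hc : ∀ v, col' (f v) = col v) :
    (WLIR H G d col).Iso (WLIR H G' d col') := by
  induction d generalizing col col' with
  | zero =>
    show CTree.Iso (.node (colMultiset H G (wlStable H G col)) [])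
      (.node (colMultiset H G' (wlStable H G' col')) [])
    rw [colMultiset_wlStable_eq_of_equiv hadj hc]
    exact CTree.iso_leaf _
  | succ d ih =>
    have hstable := wlStable_comp_equiv hadj hc
    have hM := colMultiset_wlStable_eq_of_equiv hadj hc
    by_cases hdisc : Discrete (wlStable H G col)
    · rw [WLIR_succ_of_discrete hdisc,
        WLIR_succ_of_discrete ((discrete_iff_of_map_univ_eq hM).mp hdisc), hM]
      exact CTree.iso_leaf _
    obtain ⟨c, hc, heq⟩ := WLIR_succ_of_not_discrete (d := d) hdisc
    obtain ⟨c', hc', heq'⟩ :=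
      WLIR_succ_of_not_discrete (d := d) ((discrete_iff_of_map_univ_eq hM).not.mp hdisc)
    obtain rfl : c = c' := WithTop.coe_injective (hc.symm.trans (hM ▸ hc'))
    rw [heq, heq', hM]
    refine CTree.iso_node_map_toList _
      (f.subtypeEquiv fun v => by simp [colorClass, hstable]) fun w => ih fun v => ?_
    simp [individualize, hstable]

end Soundness

section Completeness

variable {p : ℕ} {H : HashSetup p} {G G' : LGraph p}

theorem adj_iff_of_wlStep_comp_equiv (f : G.V ≃ G'.V) {col : G.V → H.C} {col' : G'.V → H.C}
    (hd : Discrete col) (h : ∀ v, wlStep H G' col' (f v) = wlStep H G col v) (u v : G.V) :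
    G.adj u v ↔ G'.adj (f u) (f v) := by
  have hc : ∀ v, col' (f v) = col v := fun v => ((wlStep_eq_iff H).mp (h v)).1
  have hinj : Function.Injective col' := by
    have : col' = col ∘ f.symm := funext fun x => by simpa using hc (f.symm x)
    exact this ▸ hd.injective.comp f.symm.injective
  refine (LGraph.nbrFinset_map_iff f).mp (fun v => Finset.val_injective ?_) u v
  refine Multiset.map_injective hinj ?_
  rw [((wlStep_eq_iff H).mp (h v)).2, Finset.map_val, Multiset.map_map]
  exact Multiset.map_congr rfl fun u _ => (hc u).symm

theorem colMultiset_wlStable_eq_of_WLIR_iso {d d' : ℕ} {col : G.V → H.C} {col' : G'.V → H.C}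
    (h : (WLIR H G d col).Iso (WLIR H G' d' col')) :
    colMultiset H G (wlStable H G col) = colMultiset H G' (wlStable H G' col') := by
  simpa only [WLIR_label] using h.label_eq

theorem exists_equiv_of_discrete {col : G.V → H.C} {col' : G'.V → H.C}
    (hdisc : Discrete (wlStable H G col))
    (hM : colMultiset H G (wlStable H G col) = colMultiset H G' (wlStable H G' col')) :
    ∃ f : G.V ≃ G'.V, (∀ u v, G.adj u v ↔ G'.adj (f u) (f v)) ∧
      ∀ v, col v = col' (f v) := by
  obtain ⟨f, hf⟩ := exists_equiv_of_map_univ_eq hdisc hM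
  refine ⟨f, ?_, fun v => eq_of_wlStable_eq f (hf v).symm⟩
  rw [wlStable, wlStable, ← Fintype.card_congr f] at hf
  rw [wlStable] at hdisc
  cases hn : Fintype.card G.V with
  | zero =>
    have := Fintype.card_eq_zero_iff.mp hn
    exact fun u => isEmptyElim u
  | succ m =>
    rw [hn] at hf hdisc
    exact adj_iff_of_wlStep_comp_equiv f (discrete_wlIter_of_discrete_succ H hn.le hdisc) hf

theorem numColors_lt_wlStable_individualize {col : G.V → H.C} {u w : G.V}
    (hcol : col u = col w) (hne : u ≠ w) :
    numColors col < numColors (wlStable H G (individualize H col w)) :=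
  (numColors_lt_of_factorsThrough (factorsThrough_individualize H col w)
    fun hfactor => hne ((H.hIndiv_inj (hfactor hcol)).2.mpr rfl)).trans_le
    (numColors_le_of_factorsThrough (factorsThrough_wlIter H _ _))

/-- Individualizing inside a nontrivial class adds a color class to the stable coloring, so
`hbudget` guarantees that a discrete stable coloring is reached before the depth runs out. -/
theorem exists_equiv_of_WLIR_iso (d : ℕ) {col : G.V → H.C} {col' : G'.V → H.C}
    (hbudget : Fintype.card G.V ≤ d + numColors (wlStable H G col))
    (hiso : (WLIR H G d col).Iso (WLIR H G' d col')) :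
    ∃ f : G.V ≃ G'.V, (∀ u v, G.adj u v ↔ G'.adj (f u) (f v)) ∧
      ∀ v, col v = col' (f v) := by
  induction d generalizing col col' with
  | zero =>
    exact exists_equiv_of_discrete (discrete_of_card_le_numColors (by omega))
      (colMultiset_wlStable_eq_of_WLIR_iso hiso)
  | succ d ih =>
    have hM := colMultiset_wlStable_eq_of_WLIR_iso hiso
    by_cases hdisc : Discrete (wlStable H G col)
    · exact exists_equiv_of_discrete hdisc hM
    obtain ⟨c, hc, heq⟩ := WLIR_succ_of_not_discrete (d := d) hdisc
    obtain ⟨c', hc', heq'⟩ :=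
      WLIR_succ_of_not_discrete (d := d) ((discrete_iff_of_map_univ_eq hM).not.mp hdisc)
    obtain rfl : c = c' := WithTop.coe_injective (hc.symm.trans (hM ▸ hc'))
    rw [heq, heq'] at hiso
    have hclass : 1 < (colorClass (wlStable H G col) c).card := by
      rw [card_colorClass]
      exact (Finset.mem_filter.mp (Finset.mem_of_min hc)).2
    obtain ⟨w, hw⟩ := Finset.card_pos.mp (one_pos.trans hclass)
    obtain ⟨u, hu, hne⟩ := Finset.exists_mem_ne hclass w
    obtain ⟨_, hmem, hchild⟩ := hiso.exists_mem_iso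
      (List.mem_map_of_mem (f := fun w => WLIR H G d (individualize H (wlStable H G col) w))
        (Finset.mem_toList.mpr hw))
    obtain ⟨w', -, rfl⟩ := List.mem_map.mp hmem
    have hgain := numColors_lt_wlStable_individualize
      (((Finset.mem_filter.mp hu).2).trans (Finset.mem_filter.mp hw).2.symm) hne
    obtain ⟨f, hadj, hf⟩ := ih (by omega) hchild
    exact ⟨f, hadj, fun v => eq_of_wlStable_eq f (H.hIndiv_inj (hf v)).1⟩

end Completeness

/-- For `d ≥ min(|G|,|G'|)`: `G ≡_{WL-IR-d} G'` iff `G ≅ G'`. -/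
theorem wlir_iso (p : ℕ) (H : HashSetup p) (G G' : LGraph p) (d : ℕ)
    (hd : min (Fintype.card G.V) (Fintype.card G'.V) ≤ d) :
    WLIRequiv H G G' d ↔ G.Iso G' := by
  constructor
  · intro hiso
    have hcard := card_eq_of_map_univ_eq (colMultiset_wlStable_eq_of_WLIR_iso hiso)
    rw [← hcard, min_self] at hd
    obtain ⟨f, hadj, hcol⟩ := exists_equiv_of_WLIR_iso d (by omega) hiso
    exact ⟨f, hadj, fun v i => iff_of_eq (congrFun (H.hInit_injective (hcol v)) i)⟩
  · rintro ⟨f, hadj, hlab⟩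
    exact WLIR_iso_of_equiv hadj d fun v =>
      congrArg H.hInit (funext fun i => propext (hlab v i).symm)
end

section
/- Let (G,v) and (G',v') be connected pointed graphs and let d ≥ 0. If G and G' are distinguished by WL-IR with d individualization steps (G ≢_{WL-IR-d} G'), then there exists an HE-GNN A of nesting depth d+1 such that cls_A(G,v) ≠ cls_A(G',v'). -/
/-!
An HE-GNN of nesting depth `d+1` whose GNNs run `K = |G| + |G'|` rounds can compute any function
of the nested invariant `nestedInv` (encode unfolding trees injectively into reals), so it suffices
to show that equal nested invariants at `v` and `v'` force isomorphic WL-IR trees.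

The outermost level marks `v`. In a connected graph whose root is the only node of its base color,
the root's `K`-round unfolding determines the size of every color class: from each node of a class
the same positive number of walks of some length reaches the root, so the number of walks from the
root into the class is that number times the size of the class. This yields a bijection of the two
graphs preserving unfoldings of every depth, hence the refined colorings, the individualized class
and, through the inner nested invariants of the individualized nodes, the subtrees of the IR tree;
induct on `d`.
-/

open Classical

noncomputable section

theorem Multiset.map_eq_map_of_factorsThrough {α β γ : Type} {f : α → β} {g : α → γ}
    (hgf : Function.FactorsThrough g f) {s t : Multiset α} (h : s.map f = t.map f) :
    s.map g = t.map g := by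
  induction s using Multiset.induction_on generalizing t with
  | empty =>
    rw [Multiset.map_zero, eq_comm, Multiset.map_eq_zero] at h
    simp [h]
  | cons a s ih =>
    obtain ⟨b, hb, hba⟩ := Multiset.mem_map.1 (h ▸ Multiset.mem_map_of_mem f (s.mem_cons_self a))
    rw [← Multiset.cons_erase hb, Multiset.map_cons, Multiset.map_cons, hba,
      Multiset.cons_inj_right] at h
    rw [← Multiset.cons_erase hb, Multiset.map_cons, Multiset.map_cons, ih h, hgf hba]

theorem exists_equiv_comp_eq_of_card_fiber_eq {α β γ : Type} [Fintype α] [Fintype β]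
    {f : α → γ} {g : β → γ}
    (h : ∀ c, Fintype.card {a // f a = c} = Fintype.card {b // g b = c}) :
    ∃ μ : α ≃ β, ∀ a, g (μ a) = f a :=
  ⟨Equiv.ofFiberEquiv fun c => Fintype.equivOfCardEq (h c), Equiv.ofFiberEquiv_map _⟩

theorem Finset.exists_equiv_get_toList_map {α X : Type} (S : Finset α) (f : α → X) :
    ∃ σ : Fin (S.toList.map f).length ≃ S, ∀ i, (S.toList.map f).get i = f (σ i) :=
  ⟨(finCongr (List.length_map f)).trans
      ((S.nodup_toList.getEquiv _).trans (Equiv.subtypeEquivRight fun _ => Finset.mem_toList)),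
    fun i => by simp⟩

section

variable {α β C : Type} (μ : α ≃ β) {c1 : α → C} {c2 : β → C}

theorem mem_filter_iff_of_equiv [Fintype α] [Fintype β] [DecidableEq C]
    (hμ : ∀ x, c2 (μ x) = c1 x) (c : C) (x : α) :
    x ∈ Finset.univ.filter (c1 · = c) ↔ μ x ∈ Finset.univ.filter (c2 · = c) := by
  simp [hμ]

theorem discrete_iff_of_equiv (hμ : ∀ x, c2 (μ x) = c1 x) : Discrete c2 ↔ Discrete c1 := by
  refine ⟨fun h x y hxy => μ.injective (h _ _ (by rw [hμ, hμ, hxy])), fun h x y hxy => ?_⟩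
  obtain ⟨x, rfl⟩ := μ.surjective x
  obtain ⟨y, rfl⟩ := μ.surjective y
  rw [hμ, hμ] at hxy
  rw [h _ _ hxy]

theorem filter_card_lt_eq_of_equiv [Fintype α] [Fintype β] [DecidableEq C]
    (hμ : ∀ x, c2 (μ x) = c1 x) :
    (Finset.univ.image c2).filter (fun c => 1 < (Finset.univ.filter (c2 · = c)).card)
      = (Finset.univ.image c1).filter (fun c => 1 < (Finset.univ.filter (c1 · = c)).card) := by
  have hcard : ∀ c, (Finset.univ.filter (c2 · = c)).card = (Finset.univ.filter (c1 · = c)).card :=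
    fun c => (Finset.card_equiv μ (mem_filter_iff_of_equiv μ hμ c)).symm
  have himage : Finset.univ.image c2 = Finset.univ.image c1 := by
    rw [← Finset.image_univ_equiv μ, Finset.image_image]
    exact congrArg (Finset.image · _) (funext hμ)
  simp only [hcard, himage]

end

section Continuum

open Cardinal

variable {α β : Type}

theorem mk_multiset_le_continuum (h : #α ≤ 𝔠) : #(Multiset α) ≤ 𝔠 :=
  (mk_le_of_surjective (f := ((↑) : List α → Multiset α)) Quot.exists_rep).trans
    ((mk_list_le_max α).trans (max_le aleph0_le_continuum h))

theorem mk_prod_le_continuum (hα : #α ≤ 𝔠) (hβ : #β ≤ 𝔠) : #(α × β) ≤ 𝔠 := by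
  simpa [mk_prod] using (mul_le_mul' hα hβ).trans continuum_mul_self.le

theorem mk_fin_fun_real_le_continuum (D : ℕ) : #(Fin D → ℝ) ≤ 𝔠 := by
  rw [← power_def, mk_real, mk_fin]
  exact power_nat_le aleph0_le_continuum

theorem exists_injective_real (h : #α ≤ 𝔠) : ∃ f : α → ℝ, Function.Injective f := by
  obtain ⟨f⟩ := (le_def α ℝ).1 (h.trans_eq mk_real.symm)
  exact ⟨f, f.injective⟩

end Continuum

/-- `UnfoldingTree α k` holds the colors of `k` rounds of color refinement started from base
colors in `α`: a node's previous color together with the multiset of its neighbours'. -/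
def UnfoldingTree (α : Type) : ℕ → Type
  | 0 => α
  | k+1 => UnfoldingTree α k × Multiset (UnfoldingTree α k)

namespace UnfoldingTree

variable {α β : Type}

def map (h : α → β) : ∀ {k : ℕ}, UnfoldingTree α k → UnfoldingTree β k
  | 0, t => h t
  | _+1, t => (t.1.map h, t.2.map (fun s => s.map h))

theorem map_injective {h : α → β} (hh : Function.Injective h) :
    ∀ {k : ℕ}, Function.Injective (map h (k := k))
  | 0 => hh
  | _+1 => fun _ _ he =>
    Prod.ext (map_injective hh (congrArg Prod.fst he))
      (Multiset.map_injective (map_injective hh) (congrArg Prod.snd he))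

def root : ∀ {k : ℕ}, UnfoldingTree α k → α
  | 0, t => t
  | _+1, t => t.1.root

/-- The number of depth-`k` descendants of `s` whose depth-`N` truncation is `t`. -/
def countDescendants {N : ℕ} (t : UnfoldingTree α N) : (k : ℕ) → UnfoldingTree α (N+k) → ℕ
  | 0, s => if s = t then 1 else 0
  | k+1, s => (s.2.map (countDescendants t k)).sum

end UnfoldingTree

namespace LGraph

variable {p : ℕ} (G : LGraph p) {α β : Type}

theorem mem_nbrFinset {u x : G.V} : x ∈ G.nbrFinset u ↔ G.adj u x := by
  simp [nbrFinset]

def unfold (e : G.V → α) : (k : ℕ) → G.V → UnfoldingTree α k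
  | 0, u => e u
  | k+1, u => (unfold e k u, (G.nbrFinset u).val.map (unfold e k))

theorem unfold_map (e : G.V → α) (h : α → β) :
    ∀ (k : ℕ) (u : G.V), G.unfold (fun x => h (e x)) k u = (G.unfold e k u).map h
  | 0, _ => rfl
  | k+1, u => by
    simp only [unfold, UnfoldingTree.map, Multiset.map_map]
    exact Prod.ext (unfold_map e h k u) (Multiset.map_congr rfl fun x _ => unfold_map e h k x)

theorem root_unfold (e : G.V → α) : ∀ (k : ℕ) (u : G.V), (G.unfold e k u).root = e u
  | 0, _ => rfl
  | k+1, u => by rw [← root_unfold e k u]; rfl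

theorem unfold_eq_of_le {q : ℕ} {G' : LGraph q} {e : G.V → α} {e' : G'.V → α}
    {u : G.V} {u' : G'.V} {a b : ℕ} (hab : a ≤ b) (h : G.unfold e b u = G'.unfold e' b u') :
    G.unfold e a u = G'.unfold e' a u' := by
  induction b, hab using Nat.le_induction with
  | base => exact h
  | succ b _ ih => exact ih (congrArg Prod.fst h)

def adjMat : Matrix G.V G.V ℕ := Matrix.of fun x y => if G.adj x y then 1 else 0

theorem adjMat_isSymm : G.adjMat.IsSymm :=
  Matrix.IsSymm.ext fun x y => by
    simp only [adjMat, Matrix.of_apply]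
    exact if_congr ⟨G.symm, G.symm⟩ rfl rfl

theorem adjMat_pow_succ_apply (k : ℕ) (x z : G.V) :
    (G.adjMat ^ (k+1)) x z = ∑ y ∈ G.nbrFinset x, (G.adjMat ^ k) y z := by
  simp [pow_succ', Matrix.mul_apply, adjMat, nbrFinset, Finset.sum_filter]

theorem exists_adjMat_pow_pos_of_within {a : G.V} :
    ∀ {r : ℕ} {b : G.V}, G.within a r b → ∃ k, 0 < (G.adjMat ^ k) b a
  | 0, _, rfl => ⟨0, by simp⟩
  | _+1, _, .inl h => exists_adjMat_pow_pos_of_within h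
  | _+1, b, .inr ⟨w, hw, hwb⟩ => by
    obtain ⟨k, hk⟩ := exists_adjMat_pow_pos_of_within hw
    refine ⟨k+1, ?_⟩
    rw [adjMat_pow_succ_apply]
    exact Finset.sum_pos' (fun _ _ => Nat.zero_le _)
      ⟨w, (G.mem_nbrFinset).2 (G.symm hwb), hk⟩

theorem countDescendants_unfold (e : G.V → α) {N : ℕ} (t : UnfoldingTree α N) :
    ∀ (k : ℕ) (x : G.V), t.countDescendants k (G.unfold e (N+k) x)
      = ∑ z ∈ Finset.univ.filter (fun z => G.unfold e N z = t), (G.adjMat ^ k) x z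
  | 0, x => by
    simp [UnfoldingTree.countDescendants, Matrix.one_apply, Finset.sum_ite_eq]
  | k+1, x => by
    show (((G.nbrFinset x).val.map (G.unfold e (N+k))).map (t.countDescendants k)).sum = _
    simp only [Multiset.map_map, adjMat_pow_succ_apply]
    rw [Finset.sum_comm]
    exact Finset.sum_congr rfl fun y _ => countDescendants_unfold e t k y

variable {α : Type} (e : G.V → α)

def IsStableAt (m : ℕ) : Prop :=
  ∀ x y, G.unfold e m x = G.unfold e m y → G.unfold e (m+1) x = G.unfold e (m+1) y

variable {G e}

theorem IsStableAt.succ {m : ℕ} (h : G.IsStableAt e m) : G.IsStableAt e (m+1) :=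
  fun _ _ hxy => Prod.ext hxy (Multiset.map_eq_map_of_factorsThrough h (congrArg Prod.snd hxy))

theorem IsStableAt.mono {m n : ℕ} (h : G.IsStableAt e m) (hmn : m ≤ n) : G.IsStableAt e n := by
  induction n, hmn using Nat.le_induction with
  | base => exact h
  | succ n _ ih => exact ih.succ

theorem isStableAt_of_card_image_le {m : ℕ}
    (h : (Finset.univ.image (G.unfold e (m+1))).card ≤ (Finset.univ.image (G.unfold e m)).card) :
    G.IsStableAt e m := by
  have himage : Finset.univ.image (G.unfold e m)
      = (Finset.univ.image (G.unfold e (m+1))).image (fun t : UnfoldingTree α (m+1) => t.1) := by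
    rw [Finset.image_image]; rfl
  have hinj : Set.InjOn (fun t : UnfoldingTree α (m+1) => t.1)
      (Finset.univ.image (G.unfold e (m+1))) :=
    Finset.injOn_of_card_image_eq (le_antisymm Finset.card_image_le (himage ▸ h))
  intro x y hxy
  exact hinj (by simp) (by simp) hxy

variable (G e)

theorem exists_isStableAt_le_card [Nonempty G.V] :
    ∃ m ≤ Fintype.card G.V, G.IsStableAt e m := by
  by_contra! hunstable
  have hgrow : ∀ m ≤ Fintype.card G.V, m + 1 ≤ (Finset.univ.image (G.unfold e m)).card := by
    intro m
    induction m with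
    | zero => exact fun _ => Finset.card_pos.2 (Finset.univ_nonempty.image _)
    | succ m ih =>
      intro hm
      have hlt := mt isStableAt_of_card_image_le (hunstable m (by omega))
      have := ih (by omega)
      omega
  have hbound : (Finset.univ.image (G.unfold e (Fintype.card G.V))).card ≤ Fintype.card G.V :=
    Finset.card_image_le.trans_eq Finset.card_univ
  have := hgrow _ le_rfl
  omega

theorem unfold_eq_of_card_le {n : ℕ} (hn : Fintype.card G.V ≤ n) {x y : G.V}
    (h : G.unfold e n x = G.unfold e n y) (j : ℕ) : G.unfold e j x = G.unfold e j y := by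
  have : Nonempty G.V := ⟨x⟩
  obtain ⟨m, hm, hstable⟩ := G.exists_isStableAt_le_card e
  rcases le_total j n with hj | hj
  · exact G.unfold_eq_of_le hj h
  · induction j, hj using Nat.le_induction with
    | base => exact h
    | succ j hj ih => exact hstable.mono (by omega) x y ih

end LGraph

namespace LGraph

variable {p : ℕ} {α : Type}

theorem nbrFinset_disjUnion_inl_s8 (G1 G2 : LGraph p) (u : G1.V) :
    (G1.disjUnion G2).nbrFinset (.inl u) = (G1.nbrFinset u).map .inl := by
  ext (x | x)
  · exact (mem_nbrFinset _).trans (G1.mem_nbrFinset.symm.trans (Finset.mem_map' _).symm)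
  · exact (mem_nbrFinset _).trans
      ⟨fun h => (h : False).elim, fun h => (Finset.mem_map.1 h).elim fun _ ha =>
        Sum.inl_ne_inr ha.2⟩

theorem nbrFinset_disjUnion_inr_s8 (G1 G2 : LGraph p) (u : G2.V) :
    (G1.disjUnion G2).nbrFinset (.inr u) = (G2.nbrFinset u).map .inr := by
  ext (x | x)
  · exact (mem_nbrFinset _).trans
      ⟨fun h => (h : False).elim, fun h => (Finset.mem_map.1 h).elim fun _ ha =>
        Sum.inr_ne_inl ha.2⟩
  · exact (mem_nbrFinset _).trans (G2.mem_nbrFinset.symm.trans (Finset.mem_map' _).symm)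

theorem unfold_disjUnion (G1 G2 : LGraph p) (f1 : G1.V → α) (f2 : G2.V → α) :
    ∀ k, (G1.disjUnion G2).unfold (Sum.elim f1 f2) k
      = Sum.elim (G1.unfold f1 k) (G2.unfold f2 k)
  | 0 => rfl
  | k+1 => by
    have ih := unfold_disjUnion G1 G2 f1 f2 k
    funext a
    rcases a with u | u
    · refine Prod.ext (congrFun ih (.inl u)) ?_
      show ((G1.disjUnion G2).nbrFinset (.inl u)).val.map _ = (G1.nbrFinset u).val.map _
      rw [nbrFinset_disjUnion_inl_s8, Finset.map_val, ih]
      exact Multiset.map_map _ _ _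
    · refine Prod.ext (congrFun ih (.inr u)) ?_
      show ((G1.disjUnion G2).nbrFinset (.inr u)).val.map _ = (G2.nbrFinset u).val.map _
      rw [nbrFinset_disjUnion_inr_s8, Finset.map_val, ih]
      exact Multiset.map_map _ _ _

variable {G1 G2 : LGraph p} {f1 : G1.V → α} {f2 : G2.V → α}

/-- Stabilization for two graphs at once, run on their disjoint union. -/
theorem unfold_sumElim_eq_of_card_add_le {n : ℕ}
    (hn : Fintype.card G1.V + Fintype.card G2.V ≤ n) {a b : G1.V ⊕ G2.V}
    (h : Sum.elim (G1.unfold f1 n) (G2.unfold f2 n) a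
      = Sum.elim (G1.unfold f1 n) (G2.unfold f2 n) b) (j : ℕ) :
    Sum.elim (G1.unfold f1 j) (G2.unfold f2 j) a
      = Sum.elim (G1.unfold f1 j) (G2.unfold f2 j) b := by
  simp only [← unfold_disjUnion] at h ⊢
  exact (G1.disjUnion G2).unfold_eq_of_card_le _ (Fintype.card_sum.trans_le hn) h j

theorem adjMat_pow_comm (G : LGraph p) (k : ℕ) (x y : G.V) :
    (G.adjMat ^ k) x y = (G.adjMat ^ k) y x :=
  (G.adjMat_isSymm.pow k).apply y x

theorem countDescendants_unfold_of_unique {G : LGraph p} {f : G.V → α} {v : G.V}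
    (hv : ∀ z, f z = f v → z = v) (N k : ℕ) (x : G.V) :
    (G.unfold f N v).countDescendants k (G.unfold f (N+k) x) = (G.adjMat ^ k) x v := by
  have hclass : Finset.univ.filter (fun z => G.unfold f N z = G.unfold f N v) = {v} := by
    ext z
    simp only [Finset.mem_filter, Finset.mem_univ, true_and, Finset.mem_singleton]
    refine ⟨fun h => hv z ?_, fun h => h ▸ rfl⟩
    simpa only [root_unfold] using congrArg UnfoldingTree.root h
  rw [countDescendants_unfold, hclass, Finset.sum_singleton]

variable {v1 : G1.V} {v2 : G2.V} {N : ℕ}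

theorem card_filter_unfold_eq (hG1 : G1.Connected)
    (hv1 : ∀ z, f1 z = f1 v1 → z = v1) (hv2 : ∀ z, f2 z = f2 v2 → z = v2)
    (hN : Fintype.card G1.V + Fintype.card G2.V ≤ N)
    (hroot : G1.unfold f1 N v1 = G2.unfold f2 N v2) (u : G1.V) :
    (Finset.univ.filter (fun x => G1.unfold f1 N x = G1.unfold f1 N u)).card
      = (Finset.univ.filter (fun y => G2.unfold f2 N y = G1.unfold f1 N u)).card := by
  have hstab11 : ∀ x y, G1.unfold f1 N x = G1.unfold f1 N y → ∀ j,
      G1.unfold f1 j x = G1.unfold f1 j y :=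
    fun x y => unfold_sumElim_eq_of_card_add_le (f2 := f2) hN (a := .inl x) (b := .inl y)
  have hstab21 : ∀ y x, G2.unfold f2 N y = G1.unfold f1 N x → ∀ j,
      G2.unfold f2 j y = G1.unfold f1 j x :=
    fun y x => unfold_sumElim_eq_of_card_add_le hN (a := .inr y) (b := .inl x)
  obtain ⟨k, hk⟩ := G1.exists_adjMat_pow_pos_of_within (hG1 v1 u).choose_spec
  have hwalks1 : ∀ x ∈ Finset.univ.filter (fun x => G1.unfold f1 N x = G1.unfold f1 N u),
      (G1.adjMat ^ k) v1 x = (G1.adjMat ^ k) u v1 := by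
    intro x hx
    rw [adjMat_pow_comm, ← countDescendants_unfold_of_unique hv1 N,
      ← countDescendants_unfold_of_unique hv1 N, hstab11 x u (Finset.mem_filter.1 hx).2]
  have hwalks2 : ∀ y ∈ Finset.univ.filter (fun y => G2.unfold f2 N y = G1.unfold f1 N u),
      (G2.adjMat ^ k) v2 y = (G1.adjMat ^ k) u v1 := by
    intro y hy
    rw [adjMat_pow_comm, ← countDescendants_unfold_of_unique hv2 N,
      ← countDescendants_unfold_of_unique hv1 N, ← hroot,
      hstab21 y u (Finset.mem_filter.1 hy).2]
  have hcount := congrArg ((G1.unfold f1 N u).countDescendants k)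
    (hstab21 v2 v1 hroot.symm (N+k))
  rw [countDescendants_unfold, countDescendants_unfold] at hcount
  rw [Finset.sum_const_nat hwalks1, Finset.sum_const_nat hwalks2] at hcount
  exact (Nat.eq_of_mul_eq_mul_right hk hcount).symm

theorem exists_equiv_unfold_eq (hG1 : G1.Connected) (hG2 : G2.Connected)
    (hv1 : ∀ z, f1 z = f1 v1 → z = v1) (hv2 : ∀ z, f2 z = f2 v2 → z = v2)
    (hN : Fintype.card G1.V + Fintype.card G2.V ≤ N)
    (hroot : G1.unfold f1 N v1 = G2.unfold f2 N v2) :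
    ∃ μ : G1.V ≃ G2.V, ∀ j x, G2.unfold f2 j (μ x) = G1.unfold f1 j x := by
  have hcard : ∀ t, Fintype.card {x // G1.unfold f1 N x = t}
      = Fintype.card {y // G2.unfold f2 N y = t} := by
    intro t
    simp only [Fintype.card_subtype]
    by_cases h1 : ∃ u, G1.unfold f1 N u = t
    · obtain ⟨u, rfl⟩ := h1
      exact card_filter_unfold_eq hG1 hv1 hv2 hN hroot u
    by_cases h2 : ∃ u, G2.unfold f2 N u = t
    · obtain ⟨u, rfl⟩ := h2
      exact (card_filter_unfold_eq hG2 hv2 hv1 (by omega) hroot.symm u).symm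
    push Not at h1 h2
    simp [h1, h2]
  obtain ⟨μ, hμ⟩ := exists_equiv_comp_eq_of_card_fiber_eq hcard
  exact ⟨μ, fun j x =>
    unfold_sumElim_eq_of_card_add_le hN (a := .inr (μ x)) (b := .inl x) (hμ x) j⟩

end LGraph

def markEmb {p D : ℕ} {G : LGraph p} (e : G.V → Fin D → ℝ) (v : G.V) : G.V → Fin (D+1) → ℝ :=
  fun w => Fin.append (e w) (fun _ => if w = v then 1 else 0)

section Marking

variable {p D : ℕ} {G : LGraph p} (e : G.V → Fin D → ℝ) (v : G.V)

theorem init_markEmb (w : G.V) : Fin.init (markEmb e v w) = e w :=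
  funext fun i => Fin.append_left (e w) (fun _ : Fin 1 => if w = v then (1 : ℝ) else 0) i

theorem markEmb_last (w : G.V) : markEmb e v w (Fin.last D) = if w = v then 1 else 0 :=
  Fin.append_right _ _ 0

theorem eq_of_markEmb_eq_self {u : G.V} (h : markEmb e v u = markEmb e v v) : u = v := by
  by_contra hne
  simpa [markEmb_last, hne] using congrFun h (Fin.last D)

end Marking

def FactorsThrough {p : ℕ} {G1 G2 : LGraph p} {α C : Type} (col1 : G1.V → C) (col2 : G2.V → C)
    (g1 : G1.V → α) (g2 : G2.V → α) : Prop :=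
  ∃ (j : ℕ) (Φ : UnfoldingTree α j → C),
    (∀ u, col1 u = Φ (G1.unfold g1 j u)) ∧ ∀ u, col2 u = Φ (G2.unfold g2 j u)

namespace FactorsThrough

variable {p : ℕ} {G1 G2 : LGraph p}

theorem eq_of_unfold_eq {α C : Type} {col1 : G1.V → C} {col2 : G2.V → C} {g1 : G1.V → α}
    {g2 : G2.V → α} (h : FactorsThrough col1 col2 g1 g2) {x : G1.V} {y : G2.V}
    (hxy : ∀ j, G1.unfold g1 j x = G2.unfold g2 j y) : col1 x = col2 y := by
  obtain ⟨j, Φ, h1, h2⟩ := h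
  rw [h1, h2, hxy]

variable {H : HashSetup p} {col1 : G1.V → H.C} {col2 : G2.V → H.C}

theorem wlIter {α : Type} {g1 : G1.V → α} {g2 : G2.V → α}
    (h : FactorsThrough col1 col2 g1 g2) :
    ∀ m, FactorsThrough (wlIter H G1 m col1) (wlIter H G2 m col2) g1 g2
  | 0 => h
  | m+1 => by
    obtain ⟨j, Φ, h1, h2⟩ := FactorsThrough.wlIter h m
    refine ⟨j+1, fun t => H.hRefine (Φ t.1) (t.2.map Φ), fun u => ?_, fun u => ?_⟩
    · show H.hRefine _ _ = H.hRefine _ (((G1.nbrFinset u).val.map (G1.unfold g1 j)).map Φ)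
      rw [Multiset.map_map, h1 u]
      exact congrArg _ (Multiset.map_congr rfl fun z _ => h1 z)
    · show H.hRefine _ _ = H.hRefine _ (((G2.nbrFinset u).val.map (G2.unfold g2 j)).map Φ)
      rw [Multiset.map_map, h2 u]
      exact congrArg _ (Multiset.map_congr rfl fun z _ => h2 z)

variable {D : ℕ} {g1 : G1.V → Fin D → ℝ} {g2 : G2.V → Fin D → ℝ}

theorem mark (h : FactorsThrough col1 col2 g1 g2) (v1 : G1.V) (v2 : G2.V) :
    FactorsThrough col1 col2 (markEmb g1 v1) (markEmb g2 v2) := by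
  obtain ⟨j, Φ, h1, h2⟩ := h
  refine ⟨j, fun t => Φ (t.map Fin.init), fun u => ?_, fun u => ?_⟩
  · simp only [h1, ← LGraph.unfold_map, init_markEmb]
  · simp only [h2, ← LGraph.unfold_map, init_markEmb]

/-- The mark appended by `markEmb` is visible at the root of every unfolding. -/
theorem individualize {v1 : G1.V} {v2 : G2.V}
    (h : FactorsThrough col1 col2 (markEmb g1 v1) (markEmb g2 v2)) :
    FactorsThrough (fun u => H.hIndiv (col1 u) (u = v1)) (fun u => H.hIndiv (col2 u) (u = v2))
      (markEmb g1 v1) (markEmb g2 v2) := by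
  obtain ⟨j, Φ, h1, h2⟩ := h
  have hmark : ∀ {G : LGraph p} (g : G.V → Fin D → ℝ) (v u : G.V),
      ((G.unfold (markEmb g v) j u).root (Fin.last D) = 1) = (u = v) := by
    intro G g v u
    by_cases huv : u = v <;> simp [LGraph.root_unfold, markEmb_last, huv]
  refine ⟨j, fun t => H.hIndiv (Φ t) (t.root (Fin.last D) = 1), fun u => ?_, fun u => ?_⟩
  · simp only [h1 u, hmark]
  · simp only [h2 u, hmark]

end FactorsThrough

theorem factorsThrough_initCol {p : ℕ} (H : HashSetup p) (G1 G2 : LGraph p) :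
    FactorsThrough (initCol H G1) (initCol H G2) G1.embG G2.embG := by
  have hlab : ∀ (G : LGraph p) (u : G.V), G.lab u = fun i => G.embG u i = 1 := by
    intro G u
    funext i
    by_cases hi : G.lab u i <;> simp [LGraph.embG, hi]
  exact ⟨0, fun t => H.hInit (fun i => t i = 1), fun u => congrArg H.hInit (hlab G1 u),
    fun u => congrArg H.hInit (hlab G2 u)⟩

theorem CTree.Iso.node_toList_map {C α β : Type} {l : Multiset C} {S1 : Finset α}
    {S2 : Finset β} {f1 : α → CTree C} {f2 : β → CTree C} (μ : S1 ≃ S2)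
    (h : ∀ x : S1, CTree.Iso (f1 x) (f2 (μ x))) :
    CTree.Iso (.node l (S1.toList.map f1)) (.node l (S2.toList.map f2)) := by
  obtain ⟨σ1, hσ1⟩ := S1.exists_equiv_get_toList_map f1
  obtain ⟨σ2, hσ2⟩ := S2.exists_equiv_get_toList_map f2
  refine .node (σ1.trans (μ.trans σ2.symm)) fun i => ?_
  rw [hσ1, hσ2, Equiv.trans_apply, Equiv.trans_apply, Equiv.apply_symm_apply]
  exact h (σ1 i)

section IRTrees

variable {p : ℕ} {H : HashSetup p} {G1 G2 : LGraph p} {col1 : G1.V → H.C} {col2 : G2.V → H.C}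
  (μ : G1.V ≃ G2.V)

theorem colMultiset_eq_of_equiv (hμ : ∀ x, col2 (μ x) = col1 x) :
    colMultiset H G1 col1 = colMultiset H G2 col2 := by
  rw [colMultiset, colMultiset, ← Finset.map_univ_equiv μ, Finset.map_val, Multiset.map_map]
  exact Multiset.map_congr rfl fun x _ => (hμ x).symm

theorem wlir_zero_iso (hμ : ∀ m x, wlIter H G2 m col2 (μ x) = wlIter H G1 m col1 x) :
    CTree.Iso (WLIR H G1 0 col1) (WLIR H G2 0 col2) := by
  have hμ' : ∀ x, wlIter H G2 (Fintype.card G2.V) col2 (μ x)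
      = wlIter H G1 (Fintype.card G1.V) col1 x := by
    rw [← Fintype.card_congr μ]; exact hμ _
  rw [WLIR, WLIR, colMultiset_eq_of_equiv μ hμ']
  exact .node (Equiv.refl _) fun i => i.elim0

theorem wlir_succ_iso {d : ℕ} (hμ : ∀ m x, wlIter H G2 m col2 (μ x) = wlIter H G1 m col1 x)
    (hchild : ∀ x, CTree.Iso
      (WLIR H G1 d fun v => H.hIndiv (wlIter H G1 (Fintype.card G1.V) col1 v) (v = x))
      (WLIR H G2 d fun v => H.hIndiv (wlIter H G2 (Fintype.card G2.V) col2 v) (v = μ x))) :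
    CTree.Iso (WLIR H G1 (d+1) col1) (WLIR H G2 (d+1) col2) := by
  have hμ' : ∀ x, wlIter H G2 (Fintype.card G2.V) col2 (μ x)
      = wlIter H G1 (Fintype.card G1.V) col1 x := by
    rw [← Fintype.card_congr μ]; exact hμ _
  rw [WLIR, WLIR]
  dsimp only
  set c1 := wlIter H G1 (Fintype.card G1.V) col1
  set c2 := wlIter H G2 (Fintype.card G2.V) col2
  by_cases hd : Discrete c1
  · rw [dif_pos hd, dif_pos ((discrete_iff_of_equiv μ hμ').2 hd), colMultiset_eq_of_equiv μ hμ']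
    exact .node (Equiv.refl _) fun i => i.elim0
  · let _ : LinearOrder H.C := H.linC
    rw [dif_neg hd, dif_neg ((discrete_iff_of_equiv μ hμ').not.2 hd),
      colMultiset_eq_of_equiv μ hμ']
    generalize hm1 : @Finset.min' H.C H.linC _ _ = m1
    generalize hm2 : @Finset.min' H.C H.linC _ _ = m2
    obtain rfl : m1 = m2 := by
      rw [← hm1, ← hm2]
      congr 1
      exact (filter_card_lt_eq_of_equiv μ hμ').symm
    exact CTree.Iso.node_toList_map (μ.subtypeEquiv (mem_filter_iff_of_equiv μ hμ' m1))
      fun x => hchild x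

end IRTrees

open Cardinal in
theorem mk_unfoldingTree_le_continuum {α : Type} (h : #α ≤ 𝔠) : ∀ k, #(UnfoldingTree α k) ≤ 𝔠
  | 0 => h
  | k+1 => mk_prod_le_continuum (mk_unfoldingTree_le_continuum h k)
      (mk_multiset_le_continuum (mk_unfoldingTree_le_continuum h k))

def GNN.snoc : {D Dm : ℕ} → GNN D Dm → {D' : ℕ} → GNNLayer Dm D' → GNN D D'
  | _, _, .last l, _, l' => .cons l (.last l')
  | _, _, .cons l rest, _, l' => .cons l (rest.snoc l')

theorem GNN.run_snoc {p : ℕ} : ∀ {D Dm D' : ℕ} (A : GNN D Dm) (l : GNNLayer Dm D')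
    (G : LGraph p) (emb : G.V → Fin D → ℝ), (A.snoc l).run G emb = l.apply G (A.run G emb)
  | _, _, _, .last _, _, _, _ => rfl
  | _, _, _, .cons l₀ rest, l, G, emb => run_snoc rest l G (l₀.apply G emb)

/-- Each layer passes on an injective real code of the current unfolding; the last layer
decodes it and applies `f`. -/
theorem GNN.exists_run_eq_comp_unfold (D k : ℕ) :
    ∀ {D' : ℕ} (f : UnfoldingTree (Fin D → ℝ) k → Fin D' → ℝ), ∃ A : GNN D D',
      ∀ {p : ℕ} (G : LGraph p) (e : G.V → Fin D → ℝ) (u : G.V),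
        A.run G e u = f (G.unfold e k u) := by
  induction k with
  | zero =>
    intro D' f
    refine ⟨.last ⟨fun _ => 0, fun x => f fun i => x (Fin.castAdd D i)⟩, fun G e u => ?_⟩
    exact congrArg f (funext fun i => Fin.append_left (e u) _ i)
  | succ k ih =>
    intro D' f
    obtain ⟨ι, hι⟩ := exists_injective_real
      (mk_unfoldingTree_le_continuum (mk_fin_fun_real_le_continuum D) k)
    obtain ⟨ιM, hιM⟩ := exists_injective_real (mk_multiset_le_continuum Cardinal.mk_real.le)
    obtain ⟨A, hA⟩ := ih fun t (_ : Fin 1) => ι t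
    let code : UnfoldingTree (Fin D → ℝ) (k+1) → ℝ × ℝ := fun t => (ι t.1, ιM (t.2.map ι))
    have hcode : Function.Injective code := fun t s h =>
      Prod.ext (hι (congrArg Prod.fst h))
        (Multiset.map_injective hι (hιM (congrArg Prod.snd h)))
    refine ⟨A.snoc ⟨fun M _ => ιM (M.map (· 0)),
      fun x => Function.extend code f 0 (x (Fin.castAdd 1 0), x (Fin.natAdd 1 0))⟩,
      fun G e u => ?_⟩
    rw [← hcode.extend_apply f 0 (G.unfold e (k+1) u)]
    simp only [GNN.run_snoc, GNNLayer.apply, Fin.append_left, Fin.append_right, hA, code,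
      Multiset.map_map]
    congr 3
    exact (Multiset.map_map ι (G.unfold e k) _).symm

def NestedTree (K : ℕ) : ℕ → ℕ → Type
  | 0, D => UnfoldingTree (Fin D → ℝ) K
  | d+1, D => UnfoldingTree ((Fin D → ℝ) × NestedTree K d (D+1)) K

/-- What an HE-GNN of nesting depth `d` whose GNNs run `K` rounds can see at `v`: the `K`-round
unfolding at `v` in which every node `u` also carries its own nested invariant, computed with `u`
marked. -/
def nestedInv (K : ℕ) {p : ℕ} : (d D : ℕ) → (G : LGraph p) → (G.V → Fin D → ℝ) → G.V →
    NestedTree K d D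
  | 0, _, G, e, v => G.unfold e K v
  | d+1, D, G, e, v => G.unfold (fun u => (e u, nestedInv K d (D+1) G (markEmb e u) u)) K v

open Cardinal in
theorem mk_nestedTree_le_continuum (K : ℕ) : ∀ d D, #(NestedTree K d D) ≤ 𝔠
  | 0, D => mk_unfoldingTree_le_continuum (mk_fin_fun_real_le_continuum D) K
  | d+1, D => mk_unfoldingTree_le_continuum
      (mk_prod_le_continuum (mk_fin_fun_real_le_continuum D)
        (mk_nestedTree_le_continuum K d (D+1))) K

theorem HEGNN.exists_run_eq_comp_nestedInv (K : ℕ) :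
    ∀ (d D D' : ℕ) (f : NestedTree K d D → Fin D' → ℝ), ∃ A : HEGNN d D D',
      ∀ {p : ℕ} (G : LGraph p) (e : G.V → Fin D → ℝ) (u : G.V),
      A.run G e u = f (nestedInv K d D G e u)
  | 0, D, D', f => by
    obtain ⟨A, hA⟩ := GNN.exists_run_eq_comp_unfold D K f
    exact ⟨.base A, fun G e u => hA G e u⟩
  | d+1, D, D', f => by
    obtain ⟨ι, hι⟩ := exists_injective_real (mk_nestedTree_le_continuum K d (D+1))
    obtain ⟨B, hB⟩ := HEGNN.exists_run_eq_comp_nestedInv K d (D+1) 1 fun t _ => ι t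
    let J : (Fin D → ℝ) × NestedTree K d (D+1) → Fin (D+1) → ℝ :=
      fun z => Fin.append z.1 fun _ => ι z.2
    have hJ : Function.Injective J := fun z w h => Prod.ext
      (funext fun i => by simpa [J] using congrFun h (Fin.castAdd 1 i))
      (hι (by simpa [J] using congrFun h (Fin.natAdd D 0)))
    obtain ⟨C, hC⟩ := GNN.exists_run_eq_comp_unfold (D+1) K
      (Function.extend (UnfoldingTree.map J) f 0)
    refine ⟨.nest B C, fun G e u => ?_⟩
    have hemb : (fun v => Fin.append (e v) (B.run G (markEmb e v) v))
        = fun v => J (e v, nestedInv K d (D+1) G (markEmb e v) v) := by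
      funext v
      rw [hB]
    show C.run G (fun v => Fin.append (e v) (B.run G (markEmb e v) v)) u = _
    rw [hemb, hC, LGraph.unfold_map]
    exact (UnfoldingTree.map_injective hJ).extend_apply f 0 _

theorem wlir_iso_of_nestedInv_eq {p : ℕ} (H : HashSetup p) {G1 G2 : LGraph p} {K : ℕ}
    (hG1 : G1.Connected) (hG2 : G2.Connected)
    (hK : Fintype.card G1.V + Fintype.card G2.V ≤ K) :
    ∀ (d D : ℕ) (g1 : G1.V → Fin D → ℝ) (g2 : G2.V → Fin D → ℝ) (col1 : G1.V → H.C)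
      (col2 : G2.V → H.C), FactorsThrough col1 col2 g1 g2 → ∀ (v1 : G1.V) (v2 : G2.V),
      (∀ u, g1 u = g1 v1 → u = v1) → (∀ u, g2 u = g2 v2 → u = v2) →
      nestedInv K d D G1 g1 v1 = nestedInv K d D G2 g2 v2 →
      CTree.Iso (WLIR H G1 d col1) (WLIR H G2 d col2)
  | 0, D, g1, g2, col1, col2, hF, v1, v2, hv1, hv2, hnv => by
    obtain ⟨μ, hμ⟩ := LGraph.exists_equiv_unfold_eq hG1 hG2 hv1 hv2 hK hnv
    exact wlir_zero_iso μ fun m x =>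
      ((hF.wlIter m).eq_of_unfold_eq fun j => (hμ j x).symm).symm
  | d+1, D, g1, g2, col1, col2, hF, v1, v2, hv1, hv2, hnv => by
    obtain ⟨μ, hμ⟩ := LGraph.exists_equiv_unfold_eq hG1 hG2
      (fun u h => hv1 u (congrArg Prod.fst h)) (fun u h => hv2 u (congrArg Prod.fst h)) hK hnv
    have hμg : ∀ j x, G1.unfold g1 j x = G2.unfold g2 j (μ x) := by
      intro j x
      have := congrArg (UnfoldingTree.map Prod.fst) (hμ j x)
      simpa only [← LGraph.unfold_map] using this.symm
    have hcol : ∀ m x, wlIter H G2 m col2 (μ x) = wlIter H G1 m col1 x :=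
      fun m x => ((hF.wlIter m).eq_of_unfold_eq (hμg · x)).symm
    refine wlir_succ_iso μ hcol fun x => ?_
    have hinner := congrArg (fun t => (UnfoldingTree.root t).2) (hμ 0 x)
    simp only [LGraph.root_unfold] at hinner
    have hcard : Fintype.card G2.V = Fintype.card G1.V := (Fintype.card_congr μ).symm
    rw [hcard]
    refine wlir_iso_of_nestedInv_eq H hG1 hG2 hK d (D+1) (markEmb g1 x) (markEmb g2 (μ x)) _ _
      ((hF.wlIter _).mark x (μ x)).individualize x (μ x)
      (fun u h => eq_of_markEmb_eq_self g1 x h) (fun u h => eq_of_markEmb_eq_self g2 (μ x) h)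
      hinner.symm

theorem wlirEquiv_of_nestedInv_eq {p : ℕ} (H : HashSetup p) {G G' : LGraph p} {v : G.V}
    {v' : G'.V} (hG : G.Connected) (hG' : G'.Connected) (d : ℕ)
    (h : nestedInv (Fintype.card G.V + Fintype.card G'.V) (d+1) p G G.embG v
      = nestedInv (Fintype.card G.V + Fintype.card G'.V) (d+1) p G' G'.embG v') :
    WLIRequiv H G G' d := by
  have hroot := congrArg (fun t => (UnfoldingTree.root t).2) h
  simp only [nestedInv, LGraph.root_unfold] at hroot
  exact wlir_iso_of_nestedInv_eq H hG hG' le_rfl d (p+1) _ _ _ _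
    ((factorsThrough_initCol H G G').mark v v') v v'
    (fun u h => eq_of_markEmb_eq_self _ v h) (fun u h => eq_of_markEmb_eq_self _ v' h) hroot

end

/-- Let `(G,v)`, `(G',v')` be connected pointed graphs, `d ≥ 0`.
If `G ≢_{WL-IR-d} G'` then some HE-GNN of nesting depth `d+1` classifies `v` and
`v'` differently. -/
theorem wlir_to_hegnn_node (p : ℕ) (H : HashSetup p) (d : ℕ) (G G' : LGraph p)
    (v : G.V) (v' : G'.V) (hG : G.Connected) (hG' : G'.Connected)
    (h : ¬ WLIRequiv H G G' d) :
    ∃ A : HEGNN (d+1) p 1, ¬ (A.clsP G v ↔ A.clsP G' v') := by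
  set K := Fintype.card G.V + Fintype.card G'.V
  have hne : nestedInv K (d+1) p G G.embG v ≠ nestedInv K (d+1) p G' G'.embG v' :=
    fun hnv => h (wlirEquiv_of_nestedInv_eq H hG hG' d hnv)
  obtain ⟨A, hA⟩ := HEGNN.exists_run_eq_comp_nestedInv K (d+1) p 1
    fun t _ => if t = nestedInv K (d+1) p G G.embG v then 1 else 0
  have hpos : A.clsP G v := by simp [HEGNN.clsP, hA]
  have hnonpos : ¬ A.clsP G' v' := by simp [HEGNN.clsP, hA, hne.symm]
  exact ⟨A, fun hiff => hnonpos (hiff.1 hpos)⟩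
end
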